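/- arXiv:2107.02837 — 3 statements merged into one kernel-verified Lean document; each statement's English description precedes it below -/
import Mathlib

section
/- Let M be a reduced, bounded below, Q_0-local A(1)-module and suppose M^{k−1} is isomorphic to a flock of seagulls. Then the quotient A(1)-module M^k/M^{k−1} is isomorphic to a direct sum of copies of Σ^k Υ_1 (1-seagulls generated in degree k). -/
/-- A graded module over the subalgebra `A(1)` of the mod 2 Steenrod algebra:
an internally `ℤ`-graded `𝔽₂`-vector space equipped with operations `Sq¹` (degree `1`)
and `Sq²` (degree `2`) satisfying `Sq¹Sq¹ = 0` and `Sq²Sq² = Sq¹Sq²Sq¹`. -/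
structure A1Module where
  carrier : Type
  [acg : AddCommGroup carrier]
  [mod : Module (ZMod 2) carrier]
  gr : ℤ → Submodule (ZMod 2) carrier
  indep : iSupIndep gr
  total : ⨆ k : ℤ, gr k = ⊤
  sq1 : carrier →ₗ[ZMod 2] carrier
  sq2 : carrier →ₗ[ZMod 2] carrier
  sq1_gr : ∀ k : ℤ, ∀ x ∈ gr k, sq1 x ∈ gr (k + 1)
  sq2_gr : ∀ k : ℤ, ∀ x ∈ gr k, sq2 x ∈ gr (k + 2)
  sq1_sq1 : ∀ x, sq1 (sq1 x) = 0
  sq2_sq2 : ∀ x, sq2 (sq2 x) = sq1 (sq2 (sq1 x))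

attribute [instance] A1Module.acg A1Module.mod

namespace A1Module

variable (M : A1Module)

/-- The Milnor primitive `Q₁ = Sq¹Sq² + Sq²Sq¹`. -/
def Q1 : M.carrier →ₗ[ZMod 2] M.carrier := M.sq1 ∘ₗ M.sq2 + M.sq2 ∘ₗ M.sq1

/-- `M` is bounded below: `M_k = 0` for all `k` below some bound. -/
def BoundedBelow : Prop := ∃ n : ℤ, ∀ k : ℤ, k < n → M.gr k = ⊥

/-- `M` is of finite type: each graded piece is a finite-dimensional `𝔽₂`-vector space. -/
def FiniteType : Prop := ∀ k : ℤ, FiniteDimensional (ZMod 2) ↥(M.gr k)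

/-- `M` is finite: finite type and only finitely many nonzero graded pieces. -/
def FiniteModule : Prop := M.FiniteType ∧ {k : ℤ | M.gr k ≠ ⊥}.Finite

/-- `M` is `Q₀`-local: the `Q₁`-Margolis homology vanishes in every degree,
i.e. every homogeneous `Q₁`-cycle is a `Q₁`-boundary. -/
def Q0Local : Prop :=
  ∀ k : ℤ, LinearMap.ker M.Q1 ⊓ M.gr k ≤ Submodule.map M.Q1 (M.gr (k - 3))

/-- `p` is a (graded) `A(1)`-submodule of `M`. -/
def IsA1Sub (p : Submodule (ZMod 2) M.carrier) : Prop :=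
  (∀ x ∈ p, M.sq1 x ∈ p) ∧ (∀ x ∈ p, M.sq2 x ∈ p) ∧ p = ⨆ k : ℤ, p ⊓ M.gr k

/-- `p` is a direct summand of `M` in the category of graded `A(1)`-modules. -/
def IsSummand (p : Submodule (ZMod 2) M.carrier) : Prop :=
  M.IsA1Sub p ∧ ∃ q, M.IsA1Sub q ∧ p ⊓ q = ⊥ ∧ p ⊔ q = ⊤

/-- The action of the eight monomial basis elements
`1, Sq¹, Sq², Sq¹Sq², Sq²Sq¹, Sq¹Sq²Sq¹, Sq²Sq¹Sq², Sq¹Sq²Sq¹Sq²` of `A(1)`. -/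
def w8 : Fin 8 → (M.carrier →ₗ[ZMod 2] M.carrier) :=
  ![LinearMap.id, M.sq1, M.sq2, M.sq1 ∘ₗ M.sq2, M.sq2 ∘ₗ M.sq1,
    M.sq1 ∘ₗ M.sq2 ∘ₗ M.sq1, M.sq2 ∘ₗ M.sq1 ∘ₗ M.sq2,
    M.sq1 ∘ₗ M.sq2 ∘ₗ M.sq1 ∘ₗ M.sq2]

/-- The action of the four monomials `1, Sq², Sq¹Sq², Sq²Sq¹Sq²`, which give an `𝔽₂`-basis of
`A(1)//A(0)` applied to a generator. -/
def w4 : Fin 4 → (M.carrier →ₗ[ZMod 2] M.carrier) :=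
  ![LinearMap.id, M.sq2, M.sq1 ∘ₗ M.sq2, M.sq2 ∘ₗ M.sq1 ∘ₗ M.sq2]

/-- `p` is a free `A(1)`-submodule of `M`: it has homogeneous elements `g i` such that the
elements `Sqᴿ (g i)`, for `Sqᴿ` running over the monomial basis of `A(1)`, form a basis of `p`.
This says exactly that `p ≅ ⊕ᵢ Σ^{d i} A(1)` as graded `A(1)`-modules. -/
def IsFreeOn (p : Submodule (ZMod 2) M.carrier) : Prop :=
  ∃ (I : Type) (d : I → ℤ) (g : I → M.carrier),
    (∀ i, g i ∈ M.gr (d i)) ∧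
    LinearIndependent (ZMod 2) (fun q : I × Fin 8 => M.w8 q.2 (g q.1)) ∧
    Submodule.span (ZMod 2) (Set.range fun q : I × Fin 8 => M.w8 q.2 (g q.1)) = p

/-- `M` is reduced: it has no nonzero free direct summand. -/
def Reduced : Prop := ∀ p, M.IsSummand p → M.IsFreeOn p → p = ⊥

/-- `p` is a flock of seagulls `⊕ᵢ Σ^{α i} Υ_{n i}` inside `M`:
there are chains of elements `y i 0, y i 1, …` (of length `n i`, possibly infinite), with
`y i j` homogeneous of degree `α i + 4j`, linked by `Sq¹ y_{i,j+1} = Sq²Sq¹Sq² y_{i,j}` and with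
`Sq¹ y_{i,0} = 0`, such that the elements `Sqᴿ y_{i,j}`, for `Sqᴿ ∈ {1, Sq², Sq¹Sq², Sq²Sq¹Sq²}`,
form an `𝔽₂`-basis of `p`.  This says exactly that `p ≅ ⊕ᵢ Σ^{α i} Υ_{n i}`
as graded `A(1)`-modules. -/
def FlockBasisOn (p : Submodule (ZMod 2) M.carrier) (I : Type) (α : I → ℤ) (n : I → ℕ∞) :
    Prop :=
  ∃ y : I → ℕ → M.carrier,
    (∀ (i : I) (j : ℕ), (j : ℕ∞) < n i → y i j ∈ M.gr (α i + 4 * (j : ℤ))) ∧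
    (∀ i : I, M.sq1 (y i 0) = 0) ∧
    (∀ (i : I) (j : ℕ), ((j + 1 : ℕ) : ℕ∞) < n i →
      M.sq1 (y i (j + 1)) = M.sq2 (M.sq1 (M.sq2 (y i j)))) ∧
    LinearIndependent (ZMod 2)
      (fun q : {x : I × ℕ // (x.2 : ℕ∞) < n x.1} × Fin 4 => M.w4 q.2 (y q.1.1.1 q.1.1.2)) ∧
    Submodule.span (ZMod 2)
      (Set.range fun q : {x : I × ℕ // (x.2 : ℕ∞) < n x.1} × Fin 4 =>
        M.w4 q.2 (y q.1.1.1 q.1.1.2)) = p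

/-- `M` is (isomorphic to) a flock of seagulls `⊕ᵢ Σ^{α i} Υ_{n i}`. -/
def IsFlock : Prop :=
  ∃ (I : Type) (α : I → ℤ) (n : I → ℕ∞), (∀ i, 1 ≤ n i) ∧ M.FlockBasisOn ⊤ I α n

/-- `M^k`: the smallest `A(1)`-submodule of `M` containing all homogeneous elements of
degree at most `k`. -/
def below (k : ℤ) : Submodule (ZMod 2) M.carrier :=
  sInf {p | (∀ x ∈ p, M.sq1 x ∈ p) ∧ (∀ x ∈ p, M.sq2 x ∈ p) ∧ ∀ j ≤ k, M.gr j ≤ p}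

/-- The `A(1)`-submodule of `M` generated by a set. -/
def a1span (s : Set M.carrier) : Submodule (ZMod 2) M.carrier :=
  sInf {p | (∀ x ∈ p, M.sq1 x ∈ p) ∧ (∀ x ∈ p, M.sq2 x ∈ p) ∧ s ⊆ p}

/-- `p` is a finite submodule: each graded piece is finite-dimensional and all but finitely
many graded pieces vanish. -/
def FiniteOn (p : Submodule (ZMod 2) M.carrier) : Prop :=
  (∀ k : ℤ, FiniteDimensional (ZMod 2) ↥(p ⊓ M.gr k)) ∧ {k : ℤ | p ⊓ M.gr k ≠ ⊥}.Finite

end A1Module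

/-- Isomorphism of graded `A(1)`-modules. -/
def A1Iso (M N : A1Module) : Prop :=
  ∃ e : M.carrier ≃ₗ[ZMod 2] N.carrier,
    (∀ x, e (M.sq1 x) = N.sq1 (e x)) ∧
    (∀ x, e (M.sq2 x) = N.sq2 (e x)) ∧
    ∀ k : ℤ, ∀ x ∈ M.gr k, e x ∈ N.gr k

namespace A1Module

variable {M : A1Module}
open scoped DirectSum

/-! ### Operator identities -/

lemma o3 (v : M.carrier) :
    M.sq2 (M.sq1 (M.sq2 (M.sq1 v))) = M.sq1 (M.sq2 (M.sq1 (M.sq2 v))) := by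
  rw [← M.sq2_sq2 v]
  exact M.sq2_sq2 (M.sq2 v)

lemma o4 (v : M.carrier) : M.sq1 (M.sq2 (M.sq2 v)) = 0 := by
  rw [M.sq2_sq2, M.sq1_sq1]

lemma o5 (v : M.carrier) : M.sq2 (M.sq2 (M.sq1 v)) = 0 := by
  simp [M.sq2_sq2, M.sq1_sq1]

lemma o6 (v : M.carrier) : M.sq1 (M.sq2 (M.sq1 (M.sq2 (M.sq1 v)))) = 0 := by
  rw [o3, M.sq1_sq1]

lemma o7 (v : M.carrier) : M.sq1 (M.sq2 (M.sq1 (M.sq2 (M.sq2 v)))) = 0 := by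
  simp [M.sq2_sq2 v, M.sq1_sq1]

lemma o9 (v : M.carrier) : M.sq2 (M.sq1 (M.sq2 (M.sq1 (M.sq2 v)))) = 0 := by
  rw [o3, o7]

/-! ### Projections onto graded components -/

noncomputable def deco (M : A1Module) : (⨁ c : ℤ, ↥(M.gr c)) ≃ₗ[ZMod 2] M.carrier :=
  LinearEquiv.ofBijective (DirectSum.coeLinearMap M.gr)
    (DirectSum.isInternal_submodule_of_iSupIndep_of_iSup_eq_top M.indep M.total)

noncomputable def proj (M : A1Module) (c : ℤ) : M.carrier →ₗ[ZMod 2] M.carrier :=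
  (M.gr c).subtype ∘ₗ (DirectSum.component (ZMod 2) ℤ (fun c => ↥(M.gr c)) c) ∘ₗ
    (M.deco.symm : M.carrier →ₗ[ZMod 2] (⨁ c : ℤ, ↥(M.gr c)))

lemma proj_mem (c : ℤ) (x : M.carrier) : M.proj c x ∈ M.gr c := Submodule.coe_mem _

lemma proj_of_mem {c : ℤ} {x : M.carrier} (hx : x ∈ M.gr c) : M.proj c x = x := by
  have h := (DirectSum.isInternal_submodule_of_iSupIndep_of_iSup_eq_top M.indep
    M.total).ofBijective_coeLinearMap_of_mem hx
  simp only [proj, deco, LinearMap.coe_comp, Function.comp_apply, LinearEquiv.coe_coe]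
  erw [h]
  rfl

lemma proj_of_ne {c c' : ℤ} {x : M.carrier} (hx : x ∈ M.gr c) (h : c ≠ c') :
    M.proj c' x = 0 := by
  have h := (DirectSum.isInternal_submodule_of_iSupIndep_of_iSup_eq_top M.indep
    M.total).ofBijective_coeLinearMap_of_mem_ne h hx
  simp only [proj, deco, LinearMap.coe_comp, Function.comp_apply, LinearEquiv.coe_coe]
  erw [h]
  rfl

lemma proj_sum (x : M.carrier) : ∃ s : Finset ℤ, (∑ c ∈ s, M.proj c x) = x := by
  classical
  refine ⟨(M.deco.symm x).support, ?_⟩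
  have h0 : ∀ c, M.proj c x = ((M.deco.symm x) c : M.carrier) := fun c => rfl
  have h2 : (DirectSum.coeLinearMap M.gr) (M.deco.symm x) = x := M.deco.apply_symm_apply x
  conv_rhs => rw [← h2, ← DirectSum.sum_support_of (M.deco.symm x), map_sum]
  exact Finset.sum_congr rfl fun c _ => by rw [h0, DirectSum.coeLinearMap_of]

lemma proj_comm {M : A1Module} {f : M.carrier →ₗ[ZMod 2] M.carrier} {t : ℤ}
    (hf : ∀ (a : ℤ) (z : M.carrier), z ∈ M.gr a → f z ∈ M.gr (a + t)) (a : ℤ) (m : M.carrier) :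
    M.proj (a + t) (f m) = f (M.proj a m) := by
  obtain ⟨s, hs⟩ := proj_sum (M := M) m
  conv_lhs => rw [← hs]
  conv_rhs => rw [← hs]
  simp only [map_sum]
  refine Finset.sum_congr rfl fun d _ => ?_
  by_cases hda : d = a
  · subst hda
    rw [proj_of_mem (proj_mem d m), proj_of_mem (hf d _ (proj_mem d m))]
  · rw [proj_of_ne (proj_mem d m) hda, proj_of_ne (hf d _ (proj_mem d m))
      (by omega : d + t ≠ a + t), map_zero]

lemma span_graded {S : Set M.carrier} (h : ∀ g ∈ S, ∃ c, g ∈ M.gr c) :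
    Submodule.span (ZMod 2) S = ⨆ c : ℤ, Submodule.span (ZMod 2) S ⊓ M.gr c := by
  apply le_antisymm
  · rw [Submodule.span_le]
    intro g hg
    obtain ⟨c, hc⟩ := h g hg
    exact Submodule.mem_iSup_of_mem c (Submodule.mem_inf.2 ⟨Submodule.subset_span hg, hc⟩)
  · exact iSup_le fun c => inf_le_left

lemma proj_mem_of_graded {p : Submodule (ZMod 2) M.carrier}
    (hp : p = ⨆ c : ℤ, p ⊓ M.gr c) {x : M.carrier} (hx : x ∈ p) (c : ℤ) : M.proj c x ∈ p := by
  have hle : p ≤ Submodule.comap (M.proj c) p := by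
    conv_lhs => rw [hp]
    refine iSup_le fun c' => ?_
    intro z hz
    rw [Submodule.mem_inf] at hz
    rw [Submodule.mem_comap]
    by_cases h : c' = c
    · rw [proj_of_mem (h ▸ hz.2)]; exact hz.1
    · rw [proj_of_ne hz.2 h]; exact Submodule.zero_mem _
  exact hle hx






lemma sq1_mem {a b : ℤ} {x : M.carrier} (h : x ∈ M.gr a) (hb : a + 1 = b) :
    M.sq1 x ∈ M.gr b := hb ▸ M.sq1_gr a x h

lemma sq2_mem {a b : ℤ} {x : M.carrier} (h : x ∈ M.gr a) (hb : a + 2 = b) :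
    M.sq2 x ∈ M.gr b := hb ▸ M.sq2_gr a x h

lemma w8m0 {a b : ℤ} {v : M.carrier} (h : v ∈ M.gr a) (hb : a + 0 = b) :
    M.w8 0 v ∈ M.gr b := by rw [← hb, add_zero]; exact h
lemma w8m1 {a b : ℤ} {v : M.carrier} (h : v ∈ M.gr a) (hb : a + 1 = b) :
    M.w8 1 v ∈ M.gr b := sq1_mem h hb
lemma w8m2 {a b : ℤ} {v : M.carrier} (h : v ∈ M.gr a) (hb : a + 2 = b) :
    M.w8 2 v ∈ M.gr b := sq2_mem h hb
lemma w8m3 {a b : ℤ} {v : M.carrier} (h : v ∈ M.gr a) (hb : a + 3 = b) :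
    M.w8 3 v ∈ M.gr b := sq1_mem (sq2_mem h rfl) (by omega)
lemma w8m4 {a b : ℤ} {v : M.carrier} (h : v ∈ M.gr a) (hb : a + 3 = b) :
    M.w8 4 v ∈ M.gr b := sq2_mem (sq1_mem h rfl) (by omega)
lemma w8m5 {a b : ℤ} {v : M.carrier} (h : v ∈ M.gr a) (hb : a + 4 = b) :
    M.w8 5 v ∈ M.gr b := sq1_mem (sq2_mem (sq1_mem h rfl) rfl) (by omega)
lemma w8m6 {a b : ℤ} {v : M.carrier} (h : v ∈ M.gr a) (hb : a + 5 = b) :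
    M.w8 6 v ∈ M.gr b := sq2_mem (sq1_mem (sq2_mem h rfl) rfl) (by omega)
lemma w8m7 {a b : ℤ} {v : M.carrier} (h : v ∈ M.gr a) (hb : a + 6 = b) :
    M.w8 7 v ∈ M.gr b := sq1_mem (sq2_mem (sq1_mem (sq2_mem h rfl) rfl) rfl) (by omega)

lemma smul_map_zero {a : ZMod 2} {v : M.carrier} (f : M.carrier →ₗ[ZMod 2] M.carrier)
    (h : a • v = 0) : a • f v = 0 := by rw [← map_smul, h, map_zero]

lemma Tzero_hom (hred : M.Reduced) (c : ℤ) (x : M.carrier) (hx : x ∈ M.gr c) :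
    M.sq1 (M.sq2 (M.sq1 (M.sq2 x))) = 0 := by
  by_contra hT0
  -- memberships of the eight words
  have hm0 : M.w8 0 x ∈ M.gr c := w8m0 hx (by ring)
  have hm1 : M.w8 1 x ∈ M.gr (c + 1) := w8m1 hx rfl
  have hm2 : M.w8 2 x ∈ M.gr (c + 2) := w8m2 hx rfl
  have hm3 : M.w8 3 x ∈ M.gr (c + 3) := w8m3 hx rfl
  have hm4 : M.w8 4 x ∈ M.gr (c + 3) := w8m4 hx rfl
  have hm5 : M.w8 5 x ∈ M.gr (c + 4) := w8m5 hx rfl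
  have hm6 : M.w8 6 x ∈ M.gr (c + 5) := w8m6 hx rfl
  have hm7 : M.w8 7 x ∈ M.gr (c + 6) := w8m7 hx rfl
  -- the functional φ
  obtain ⟨φ0, hφ0⟩ : ∃ φ0 : M.carrier →ₗ[ZMod 2] ZMod 2,
      φ0 (M.sq1 (M.sq2 (M.sq1 (M.sq2 x)))) = 1 := by
    obtain ⟨V, hV⟩ := Submodule.exists_isCompl (ZMod 2 ∙ (M.sq1 (M.sq2 (M.sq1 (M.sq2 x)))))
    refine ⟨(LinearEquiv.toSpanNonzeroSingleton (ZMod 2) M.carrier _ hT0).symm.toLinearMap ∘ₗ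
      Submodule.linearProjOfIsCompl _ V hV, ?_⟩
    have h1 : Submodule.linearProjOfIsCompl _ V hV (M.sq1 (M.sq2 (M.sq1 (M.sq2 x)))) =
        ⟨_, Submodule.mem_span_singleton_self _⟩ :=
      Submodule.linearProjOfIsCompl_apply_left hV ⟨_, Submodule.mem_span_singleton_self _⟩
    simp only [LinearMap.coe_comp, Function.comp_apply, h1, LinearEquiv.coe_coe]
    rw [LinearEquiv.symm_apply_eq]
    ext
    simp [LinearEquiv.toSpanNonzeroSingleton]
  set φ : M.carrier →ₗ[ZMod 2] ZMod 2 := φ0 ∘ₗ M.proj (c + 6) with hφdef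
  have hφT : φ (M.w8 7 x) = 1 := by
    show φ0 (M.proj (c + 6) (M.w8 7 x)) = 1
    rw [proj_of_mem hm7]; exact hφ0
  have hφz : ∀ {a : ℤ} (z : M.carrier), z ∈ M.gr a → a ≠ c + 6 → φ z = 0 := by
    intro a z hz ha
    show φ0 (M.proj (c + 6) z) = 0
    rw [proj_of_ne hz ha, map_zero]
  -- the retraction r
  set r : M.carrier →ₗ[ZMod 2] M.carrier :=
    LinearMap.toSpanSingleton (ZMod 2) M.carrier (M.w8 0 x) ∘ₗ (φ ∘ₗ M.w8 7) +
    LinearMap.toSpanSingleton (ZMod 2) M.carrier (M.w8 1 x) ∘ₗ (φ ∘ₗ M.w8 6) +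
    LinearMap.toSpanSingleton (ZMod 2) M.carrier (M.w8 2 x) ∘ₗ (φ ∘ₗ M.w8 5) +
    LinearMap.toSpanSingleton (ZMod 2) M.carrier (M.w8 3 x) ∘ₗ (φ ∘ₗ M.w8 3) +
    LinearMap.toSpanSingleton (ZMod 2) M.carrier (M.w8 4 x) ∘ₗ (φ ∘ₗ M.w8 4) +
    LinearMap.toSpanSingleton (ZMod 2) M.carrier (M.w8 5 x) ∘ₗ (φ ∘ₗ M.w8 2) +
    LinearMap.toSpanSingleton (ZMod 2) M.carrier (M.w8 6 x) ∘ₗ (φ ∘ₗ M.w8 1) +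
    LinearMap.toSpanSingleton (ZMod 2) M.carrier (M.w8 7 x) ∘ₗ (φ ∘ₗ M.w8 0) with hrdef0
  have hrdef : ∀ m : M.carrier, r m =
      φ (M.w8 7 m) • M.w8 0 x + φ (M.w8 6 m) • M.w8 1 x + φ (M.w8 5 m) • M.w8 2 x +
      φ (M.w8 3 m) • M.w8 3 x + φ (M.w8 4 m) • M.w8 4 x + φ (M.w8 2 m) • M.w8 5 x +
      φ (M.w8 1 m) • M.w8 6 x + φ (M.w8 0 m) • M.w8 7 x := fun m => rfl
  -- r fixes x
  have hrx : r x = x := by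
    rw [hrdef x, hφT, hφz (M.w8 6 x) hm6 (by omega), hφz (M.w8 5 x) hm5 (by omega),
      hφz (M.w8 3 x) hm3 (by omega), hφz (M.w8 4 x) hm4 (by omega),
      hφz (M.w8 2 x) hm2 (by omega), hφz (M.w8 1 x) hm1 (by omega),
      hφz (M.w8 0 x) hm0 (by omega)]
    show (1 : ZMod 2) • x + 0 • M.w8 1 x + 0 • M.w8 2 x + 0 • M.w8 3 x + 0 • M.w8 4 x +
      0 • M.w8 5 x + 0 • M.w8 6 x + 0 • M.w8 7 x = x
    simp
  -- r commutes with sq1 and sq2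
  have hc1 : ∀ m, r (M.sq1 m) = M.sq1 (r m) := by
    intro m
    rw [hrdef, hrdef]
    show φ (M.sq1 (M.sq2 (M.sq1 (M.sq2 (M.sq1 m))))) • x +
        φ (M.sq2 (M.sq1 (M.sq2 (M.sq1 m)))) • M.sq1 x +
        φ (M.sq1 (M.sq2 (M.sq1 (M.sq1 m)))) • M.sq2 x +
        φ (M.sq1 (M.sq2 (M.sq1 m))) • M.sq1 (M.sq2 x) +
        φ (M.sq2 (M.sq1 (M.sq1 m))) • M.sq2 (M.sq1 x) +
        φ (M.sq2 (M.sq1 m)) • M.sq1 (M.sq2 (M.sq1 x)) +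
        φ (M.sq1 (M.sq1 m)) • M.sq2 (M.sq1 (M.sq2 x)) +
        φ (M.sq1 m) • M.sq1 (M.sq2 (M.sq1 (M.sq2 x))) =
      M.sq1 (φ (M.sq1 (M.sq2 (M.sq1 (M.sq2 m)))) • x +
        φ (M.sq2 (M.sq1 (M.sq2 m))) • M.sq1 x +
        φ (M.sq1 (M.sq2 (M.sq1 m))) • M.sq2 x +
        φ (M.sq1 (M.sq2 m)) • M.sq1 (M.sq2 x) +
        φ (M.sq2 (M.sq1 m)) • M.sq2 (M.sq1 x) +
        φ (M.sq2 m) • M.sq1 (M.sq2 (M.sq1 x)) +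
        φ (M.sq1 m) • M.sq2 (M.sq1 (M.sq2 x)) +
        φ m • M.sq1 (M.sq2 (M.sq1 (M.sq2 x))))
    simp only [map_add, map_smul, M.sq1_sq1, M.sq2_sq2, o3, map_zero, smul_zero, zero_smul,
      zero_add, add_zero]
  have hc2 : ∀ m, r (M.sq2 m) = M.sq2 (r m) := by
    intro m
    rw [hrdef, hrdef]
    show φ (M.sq1 (M.sq2 (M.sq1 (M.sq2 (M.sq2 m))))) • x +
        φ (M.sq2 (M.sq1 (M.sq2 (M.sq2 m)))) • M.sq1 x +
        φ (M.sq1 (M.sq2 (M.sq1 (M.sq2 m)))) • M.sq2 x +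
        φ (M.sq1 (M.sq2 (M.sq2 m))) • M.sq1 (M.sq2 x) +
        φ (M.sq2 (M.sq1 (M.sq2 m))) • M.sq2 (M.sq1 x) +
        φ (M.sq2 (M.sq2 m)) • M.sq1 (M.sq2 (M.sq1 x)) +
        φ (M.sq1 (M.sq2 m)) • M.sq2 (M.sq1 (M.sq2 x)) +
        φ (M.sq2 m) • M.sq1 (M.sq2 (M.sq1 (M.sq2 x))) =
      M.sq2 (φ (M.sq1 (M.sq2 (M.sq1 (M.sq2 m)))) • x +
        φ (M.sq2 (M.sq1 (M.sq2 m))) • M.sq1 x +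
        φ (M.sq1 (M.sq2 (M.sq1 m))) • M.sq2 x +
        φ (M.sq1 (M.sq2 m)) • M.sq1 (M.sq2 x) +
        φ (M.sq2 (M.sq1 m)) • M.sq2 (M.sq1 x) +
        φ (M.sq2 m) • M.sq1 (M.sq2 (M.sq1 x)) +
        φ (M.sq1 m) • M.sq2 (M.sq1 (M.sq2 x)) +
        φ m • M.sq1 (M.sq2 (M.sq1 (M.sq2 x))))
    simp only [map_add, map_smul, M.sq1_sq1, M.sq2_sq2, o3, map_zero, smul_zero, zero_smul,
      zero_add, add_zero]
  -- r preserves degrees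
  have hrgr : ∀ (a : ℤ) (m : M.carrier), m ∈ M.gr a → r m ∈ M.gr a := by
    intro a m hm
    rw [hrdef]
    have t0 : φ (M.w8 7 m) • M.w8 0 x ∈ M.gr a := by
      by_cases h : a = c + 0
      · exact Submodule.smul_mem _ _ (by rw [h, add_zero]; exact hm0)
      · rw [hφz (M.w8 7 m) (w8m7 hm rfl) (by omega), zero_smul]; exact Submodule.zero_mem _
    have t1 : φ (M.w8 6 m) • M.w8 1 x ∈ M.gr a := by
      by_cases h : a = c + 1
      · exact Submodule.smul_mem _ _ (by rw [h]; exact hm1)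
      · rw [hφz (M.w8 6 m) (w8m6 hm rfl) (by omega), zero_smul]; exact Submodule.zero_mem _
    have t2 : φ (M.w8 5 m) • M.w8 2 x ∈ M.gr a := by
      by_cases h : a = c + 2
      · exact Submodule.smul_mem _ _ (by rw [h]; exact hm2)
      · rw [hφz (M.w8 5 m) (w8m5 hm rfl) (by omega), zero_smul]; exact Submodule.zero_mem _
    have t3 : φ (M.w8 3 m) • M.w8 3 x ∈ M.gr a := by
      by_cases h : a = c + 3
      · exact Submodule.smul_mem _ _ (by rw [h]; exact hm3)
      · rw [hφz (M.w8 3 m) (w8m3 hm rfl) (by omega), zero_smul]; exact Submodule.zero_mem _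
    have t4 : φ (M.w8 4 m) • M.w8 4 x ∈ M.gr a := by
      by_cases h : a = c + 3
      · exact Submodule.smul_mem _ _ (by rw [h]; exact hm4)
      · rw [hφz (M.w8 4 m) (w8m4 hm rfl) (by omega), zero_smul]; exact Submodule.zero_mem _
    have t5 : φ (M.w8 2 m) • M.w8 5 x ∈ M.gr a := by
      by_cases h : a = c + 4
      · exact Submodule.smul_mem _ _ (by rw [h]; exact hm5)
      · rw [hφz (M.w8 2 m) (w8m2 hm rfl) (by omega), zero_smul]; exact Submodule.zero_mem _
    have t6 : φ (M.w8 1 m) • M.w8 6 x ∈ M.gr a := by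
      by_cases h : a = c + 5
      · exact Submodule.smul_mem _ _ (by rw [h]; exact hm6)
      · rw [hφz (M.w8 1 m) (w8m1 hm rfl) (by omega), zero_smul]; exact Submodule.zero_mem _
    have t7 : φ (M.w8 0 m) • M.w8 7 x ∈ M.gr a := by
      by_cases h : a = c + 6
      · exact Submodule.smul_mem _ _ (by rw [h]; exact hm7)
      · rw [hφz (M.w8 0 m) (w8m0 hm rfl) (by omega), zero_smul]; exact Submodule.zero_mem _
    exact add_mem (add_mem (add_mem (add_mem (add_mem (add_mem (add_mem t0 t1) t2) t3) t4) t5)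
      t6) t7
  -- the span p
  have hgen : ∀ i : Fin 8,
      M.w8 i x ∈ Submodule.span (ZMod 2) (Set.range fun i : Fin 8 => M.w8 i x) :=
    fun i => Submodule.subset_span ⟨i, rfl⟩
  set p := Submodule.span (ZMod 2) (Set.range fun i : Fin 8 => M.w8 i x) with hpdef
  have hp1 : ∀ z ∈ p, M.sq1 z ∈ p := by
    intro z hz
    have hle : p ≤ Submodule.comap M.sq1 p := by
      rw [hpdef, Submodule.span_le]
      rintro _ ⟨i, rfl⟩
      simp only [Set.mem_setOf_eq, SetLike.mem_coe, Submodule.mem_comap]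
      fin_cases i
      · exact hgen 1
      · show M.sq1 (M.sq1 x) ∈ p; rw [M.sq1_sq1]; exact Submodule.zero_mem _
      · exact hgen 3
      · show M.sq1 (M.sq1 (M.sq2 x)) ∈ p; rw [M.sq1_sq1]; exact Submodule.zero_mem _
      · exact hgen 5
      · show M.sq1 (M.sq1 (M.sq2 (M.sq1 x))) ∈ p; rw [M.sq1_sq1]; exact Submodule.zero_mem _
      · exact hgen 7
      · show M.sq1 (M.sq1 (M.sq2 (M.sq1 (M.sq2 x)))) ∈ p; rw [M.sq1_sq1]
        exact Submodule.zero_mem _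
    exact hle hz
  have hp2 : ∀ z ∈ p, M.sq2 z ∈ p := by
    intro z hz
    have hle : p ≤ Submodule.comap M.sq2 p := by
      rw [hpdef, Submodule.span_le]
      rintro _ ⟨i, rfl⟩
      simp only [Set.mem_setOf_eq, SetLike.mem_coe, Submodule.mem_comap]
      fin_cases i
      · exact hgen 2
      · exact hgen 4
      · show M.sq2 (M.sq2 x) ∈ p; rw [M.sq2_sq2]; exact hgen 5
      · exact hgen 6
      · show M.sq2 (M.sq2 (M.sq1 x)) ∈ p; rw [o5]; exact Submodule.zero_mem _
      · show M.sq2 (M.sq1 (M.sq2 (M.sq1 x))) ∈ p; rw [o3]; exact hgen 7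
      · show M.sq2 (M.sq2 (M.sq1 (M.sq2 x))) ∈ p; rw [o5]; exact Submodule.zero_mem _
      · show M.sq2 (M.sq1 (M.sq2 (M.sq1 (M.sq2 x)))) ∈ p; rw [o9]; exact Submodule.zero_mem _
    exact hle hz
  have hpgr : p = ⨆ c' : ℤ, p ⊓ M.gr c' := by
    rw [hpdef]
    refine span_graded ?_
    rintro g ⟨i, rfl⟩
    fin_cases i
    exacts [⟨c, hm0⟩, ⟨c + 1, hm1⟩, ⟨c + 2, hm2⟩, ⟨c + 3, hm3⟩, ⟨c + 3, hm4⟩, ⟨c + 4, hm5⟩,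
      ⟨c + 5, hm6⟩, ⟨c + 6, hm7⟩]
  -- the kernel q
  have hq1 : ∀ z ∈ LinearMap.ker r, M.sq1 z ∈ LinearMap.ker r := by
    intro z hz
    rw [LinearMap.mem_ker] at hz ⊢
    rw [hc1, hz, map_zero]
  have hq2 : ∀ z ∈ LinearMap.ker r, M.sq2 z ∈ LinearMap.ker r := by
    intro z hz
    rw [LinearMap.mem_ker] at hz ⊢
    rw [hc2, hz, map_zero]
  have hrgr0 : ∀ (a : ℤ) (z : M.carrier), z ∈ M.gr a → r z ∈ M.gr (a + 0) := by
    intro a z hzz; rw [add_zero]; exact hrgr a z hzz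
  have hqgr : LinearMap.ker r = ⨆ c' : ℤ, LinearMap.ker r ⊓ M.gr c' := by
    apply le_antisymm
    · intro m hm
      obtain ⟨s, hs⟩ := proj_sum (M := M) m
      rw [← hs]
      refine Submodule.sum_mem _ fun d _ => Submodule.mem_iSup_of_mem d
        (Submodule.mem_inf.2 ⟨?_, proj_mem d m⟩)
      rw [LinearMap.mem_ker]
      have h := proj_comm (M := M) (f := r) (t := 0) hrgr0 d m
      rw [add_zero] at h
      rw [← h, LinearMap.mem_ker.mp hm, map_zero]
    · exact iSup_le fun c' => inf_le_left
  have hrp : ∀ m, r m ∈ p := by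
    intro m
    rw [hrdef]
    exact add_mem (add_mem (add_mem (add_mem (add_mem (add_mem (add_mem
      (Submodule.smul_mem _ _ (hgen 0)) (Submodule.smul_mem _ _ (hgen 1)))
      (Submodule.smul_mem _ _ (hgen 2))) (Submodule.smul_mem _ _ (hgen 3)))
      (Submodule.smul_mem _ _ (hgen 4))) (Submodule.smul_mem _ _ (hgen 5)))
      (Submodule.smul_mem _ _ (hgen 6))) (Submodule.smul_mem _ _ (hgen 7))
  have hre : ∀ i : Fin 8, r (M.w8 i x) = M.w8 i x := by
    intro i
    fin_cases i
    · exact hrx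
    · show r (M.sq1 x) = M.sq1 x; rw [hc1, hrx]
    · show r (M.sq2 x) = M.sq2 x; rw [hc2, hrx]
    · show r (M.sq1 (M.sq2 x)) = M.sq1 (M.sq2 x); rw [hc1, hc2, hrx]
    · show r (M.sq2 (M.sq1 x)) = M.sq2 (M.sq1 x); rw [hc2, hc1, hrx]
    · show r (M.sq1 (M.sq2 (M.sq1 x))) = M.sq1 (M.sq2 (M.sq1 x)); rw [hc1, hc2, hc1, hrx]
    · show r (M.sq2 (M.sq1 (M.sq2 x))) = M.sq2 (M.sq1 (M.sq2 x)); rw [hc2, hc1, hc2, hrx]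
    · show r (M.sq1 (M.sq2 (M.sq1 (M.sq2 x)))) = M.sq1 (M.sq2 (M.sq1 (M.sq2 x)))
      rw [hc1, hc2, hc1, hc2, hrx]
  have hrr : ∀ m, r (r m) = r m := by
    intro m
    conv_lhs => rw [hrdef m]
    rw [map_add, map_add, map_add, map_add, map_add, map_add, map_add,
      map_smul, map_smul, map_smul, map_smul, map_smul, map_smul, map_smul, map_smul,
      hre 0, hre 1, hre 2, hre 3, hre 4, hre 5, hre 6, hre 7]
    exact (hrdef m).symm
  have hid : ∀ z ∈ p, r z = z := by
    intro z hz
    induction hz using Submodule.span_induction with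
    | mem g hg => obtain ⟨i, rfl⟩ := hg; exact hre i
    | zero => exact map_zero r
    | add u v _ _ hu hv => rw [map_add, hu, hv]
    | smul a u _ hu => rw [map_smul, hu]
  have hpq : p ⊓ LinearMap.ker r = ⊥ := by
    rw [eq_bot_iff]
    rintro z hz
    rw [Submodule.mem_inf] at hz
    rw [Submodule.mem_bot]
    rw [← hid z hz.1, LinearMap.mem_ker.mp hz.2]
  have hsup : p ⊔ LinearMap.ker r = ⊤ := by
    rw [eq_top_iff]
    intro m _
    refine Submodule.mem_sup.2 ⟨r m, hrp m, m - r m, ?_, by abel⟩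
    rw [LinearMap.mem_ker, map_sub, hrr, sub_self]
  -- linear independence of the eight words
  have hTne : ∀ a : ZMod 2, a • M.sq1 (M.sq2 (M.sq1 (M.sq2 x))) = 0 → a = 0 := by
    intro a ha
    rcases smul_eq_zero.mp ha with h | h
    · exact h
    · exact absurd h hT0
  have hind : LinearIndependent (ZMod 2)
      (fun q : PUnit × Fin 8 => M.w8 q.2 ((fun _ : PUnit => x) q.1)) := by
    rw [Fintype.linearIndependent_iff]
    intro g hg
    rw [Fintype.sum_prod_type] at hg
    simp only [Finset.univ_unique, Finset.sum_singleton] at hg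
    rw [Fin.sum_univ_eight] at hg
    have E0 : g (default, 0) • M.w8 0 x = 0 := by
      have h := congrArg (M.proj c) hg
      simpa only [map_add, map_smul, map_zero, proj_of_mem hm0,
        proj_of_ne hm1 (show c + 1 ≠ c by omega), proj_of_ne hm2 (show c + 2 ≠ c by omega),
        proj_of_ne hm3 (show c + 3 ≠ c by omega), proj_of_ne hm4 (show c + 3 ≠ c by omega),
        proj_of_ne hm5 (show c + 4 ≠ c by omega), proj_of_ne hm6 (show c + 5 ≠ c by omega),
        proj_of_ne hm7 (show c + 6 ≠ c by omega), smul_zero, add_zero, zero_add] using h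
    have E1 : g (default, 1) • M.w8 1 x = 0 := by
      have h := congrArg (M.proj (c + 1)) hg
      simpa only [map_add, map_smul, map_zero, proj_of_mem hm1,
        proj_of_ne hm0 (show c ≠ c + 1 by omega), proj_of_ne hm2 (show c + 2 ≠ c + 1 by omega),
        proj_of_ne hm3 (show c + 3 ≠ c + 1 by omega),
        proj_of_ne hm4 (show c + 3 ≠ c + 1 by omega),
        proj_of_ne hm5 (show c + 4 ≠ c + 1 by omega),
        proj_of_ne hm6 (show c + 5 ≠ c + 1 by omega),
        proj_of_ne hm7 (show c + 6 ≠ c + 1 by omega), smul_zero, add_zero, zero_add] using h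
    have E2 : g (default, 2) • M.w8 2 x = 0 := by
      have h := congrArg (M.proj (c + 2)) hg
      simpa only [map_add, map_smul, map_zero, proj_of_mem hm2,
        proj_of_ne hm0 (show c ≠ c + 2 by omega), proj_of_ne hm1 (show c + 1 ≠ c + 2 by omega),
        proj_of_ne hm3 (show c + 3 ≠ c + 2 by omega),
        proj_of_ne hm4 (show c + 3 ≠ c + 2 by omega),
        proj_of_ne hm5 (show c + 4 ≠ c + 2 by omega),
        proj_of_ne hm6 (show c + 5 ≠ c + 2 by omega),
        proj_of_ne hm7 (show c + 6 ≠ c + 2 by omega), smul_zero, add_zero, zero_add] using h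
    have E3 : g (default, 3) • M.w8 3 x + g (default, 4) • M.w8 4 x = 0 := by
      have h := congrArg (M.proj (c + 3)) hg
      simpa only [map_add, map_smul, map_zero, proj_of_mem hm3, proj_of_mem hm4,
        proj_of_ne hm0 (show c ≠ c + 3 by omega), proj_of_ne hm1 (show c + 1 ≠ c + 3 by omega),
        proj_of_ne hm2 (show c + 2 ≠ c + 3 by omega),
        proj_of_ne hm5 (show c + 4 ≠ c + 3 by omega),
        proj_of_ne hm6 (show c + 5 ≠ c + 3 by omega),
        proj_of_ne hm7 (show c + 6 ≠ c + 3 by omega), smul_zero, add_zero, zero_add] using h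
    have E5 : g (default, 5) • M.w8 5 x = 0 := by
      have h := congrArg (M.proj (c + 4)) hg
      simpa only [map_add, map_smul, map_zero, proj_of_mem hm5,
        proj_of_ne hm0 (show c ≠ c + 4 by omega), proj_of_ne hm1 (show c + 1 ≠ c + 4 by omega),
        proj_of_ne hm2 (show c + 2 ≠ c + 4 by omega),
        proj_of_ne hm3 (show c + 3 ≠ c + 4 by omega),
        proj_of_ne hm4 (show c + 3 ≠ c + 4 by omega),
        proj_of_ne hm6 (show c + 5 ≠ c + 4 by omega),
        proj_of_ne hm7 (show c + 6 ≠ c + 4 by omega), smul_zero, add_zero, zero_add] using h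
    have E6 : g (default, 6) • M.w8 6 x = 0 := by
      have h := congrArg (M.proj (c + 5)) hg
      simpa only [map_add, map_smul, map_zero, proj_of_mem hm6,
        proj_of_ne hm0 (show c ≠ c + 5 by omega), proj_of_ne hm1 (show c + 1 ≠ c + 5 by omega),
        proj_of_ne hm2 (show c + 2 ≠ c + 5 by omega),
        proj_of_ne hm3 (show c + 3 ≠ c + 5 by omega),
        proj_of_ne hm4 (show c + 3 ≠ c + 5 by omega),
        proj_of_ne hm5 (show c + 4 ≠ c + 5 by omega),
        proj_of_ne hm7 (show c + 6 ≠ c + 5 by omega), smul_zero, add_zero, zero_add] using h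
    have E7 : g (default, 7) • M.w8 7 x = 0 := by
      have h := congrArg (M.proj (c + 6)) hg
      simpa only [map_add, map_smul, map_zero, proj_of_mem hm7,
        proj_of_ne hm0 (show c ≠ c + 6 by omega), proj_of_ne hm1 (show c + 1 ≠ c + 6 by omega),
        proj_of_ne hm2 (show c + 2 ≠ c + 6 by omega),
        proj_of_ne hm3 (show c + 3 ≠ c + 6 by omega),
        proj_of_ne hm4 (show c + 3 ≠ c + 6 by omega),
        proj_of_ne hm5 (show c + 4 ≠ c + 6 by omega),
        proj_of_ne hm6 (show c + 5 ≠ c + 6 by omega), smul_zero, add_zero, zero_add] using h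
    have k0 : g (default, 0) = 0 :=
      hTne _ (smul_map_zero (M.sq1 ∘ₗ M.sq2 ∘ₗ M.sq1 ∘ₗ M.sq2) E0)
    have k1 : g (default, 1) = 0 := by
      have h2 : g (default, 1) • M.sq2 (M.sq1 (M.sq2 (M.sq1 x))) = 0 :=
        smul_map_zero (M.sq2 ∘ₗ M.sq1 ∘ₗ M.sq2) E1
      rw [o3] at h2
      exact hTne _ h2
    have k2 : g (default, 2) = 0 :=
      hTne _ (smul_map_zero (M.sq1 ∘ₗ M.sq2 ∘ₗ M.sq1) E2)
    have k3 : g (default, 3) = 0 := by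
      have h := congrArg (⇑(M.sq1 ∘ₗ M.sq2)) E3
      simp only [map_add, map_smul, map_zero] at h
      have h2 : g (default, 3) • M.sq1 (M.sq2 (M.sq1 (M.sq2 x))) +
          g (default, 4) • M.sq1 (M.sq2 (M.sq2 (M.sq1 x))) = 0 := h
      rw [o4 (M.sq1 x), smul_zero, add_zero] at h2
      exact hTne _ h2
    have E4 : g (default, 4) • M.w8 4 x = 0 := by
      rw [k3, zero_smul, zero_add] at E3
      exact E3
    have k4 : g (default, 4) = 0 := by
      have h2 : g (default, 4) • M.sq2 (M.sq1 (M.sq2 (M.sq1 x))) = 0 :=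
        smul_map_zero (M.sq2 ∘ₗ M.sq1) E4
      rw [o3] at h2
      exact hTne _ h2
    have k5 : g (default, 5) = 0 := by
      have h2 : g (default, 5) • M.sq2 (M.sq1 (M.sq2 (M.sq1 x))) = 0 :=
        smul_map_zero M.sq2 E5
      rw [o3] at h2
      exact hTne _ h2
    have k6 : g (default, 6) = 0 :=
      hTne _ (smul_map_zero M.sq1 E6)
    have k7 : g (default, 7) = 0 := hTne _ E7
    rintro ⟨⟨⟩, i⟩
    fin_cases i
    exacts [k0, k1, k2, k3, k4, k5, k6, k7]
  have hfree : M.IsFreeOn p := by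
    refine ⟨PUnit, fun _ => c, fun _ => x, fun _ => hx, hind, ?_⟩
    rw [hpdef]
    congr 1
    ext z
    constructor
    · rintro ⟨⟨u, i⟩, rfl⟩; exact ⟨i, rfl⟩
    · rintro ⟨i, rfl⟩; exact ⟨⟨PUnit.unit, i⟩, rfl⟩
  have hbot : p = ⊥ :=
    hred p ⟨⟨hp1, hp2, hpgr⟩, LinearMap.ker r, ⟨hq1, hq2, hqgr⟩, hpq, hsup⟩ hfree
  have hxb : x ∈ (⊥ : Submodule (ZMod 2) M.carrier) := hbot ▸ hgen 0
  rw [Submodule.mem_bot] at hxb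
  apply hT0
  rw [hxb]
  simp

lemma Tzero (hred : M.Reduced) (v : M.carrier) :
    M.sq1 (M.sq2 (M.sq1 (M.sq2 v))) = 0 := by
  obtain ⟨s, hs⟩ := proj_sum (M := M) v
  have h : (M.sq1 ∘ₗ M.sq2 ∘ₗ M.sq1 ∘ₗ M.sq2) v = 0 := by
    rw [← hs, map_sum]
    exact Finset.sum_eq_zero fun d _ => Tzero_hom hred d _ (proj_mem d v)
  exact h







lemma hQ1app (z : M.carrier) : M.Q1 z = M.sq1 (M.sq2 z) + M.sq2 (M.sq1 z) := rfl

lemma w4m0 {a b : ℤ} {v : M.carrier} (h : v ∈ M.gr a) (hb : a + 0 = b) :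
    M.w4 0 v ∈ M.gr b := by
  have : a = b := by omega
  subst this
  exact h
lemma w4m1 {a b : ℤ} {v : M.carrier} (h : v ∈ M.gr a) (hb : a + 2 = b) :
    M.w4 1 v ∈ M.gr b := sq2_mem h hb
lemma w4m2 {a b : ℤ} {v : M.carrier} (h : v ∈ M.gr a) (hb : a + 3 = b) :
    M.w4 2 v ∈ M.gr b := sq1_mem (sq2_mem h rfl) (by omega)
lemma w4m3 {a b : ℤ} {v : M.carrier} (h : v ∈ M.gr a) (hb : a + 5 = b) :
    M.w4 3 v ∈ M.gr b := sq2_mem (sq1_mem (sq2_mem h rfl) rfl) (by omega)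

lemma below_sq1 {k : ℤ} {z : M.carrier} (hz : z ∈ M.below k) : M.sq1 z ∈ M.below k := by
  rw [below, Submodule.mem_sInf] at hz ⊢
  intro p hp
  exact hp.1 z (hz p hp)

lemma below_sq2 {k : ℤ} {z : M.carrier} (hz : z ∈ M.below k) : M.sq2 z ∈ M.below k := by
  rw [below, Submodule.mem_sInf] at hz ⊢
  intro p hp
  exact hp.2.1 z (hz p hp)

lemma gr_le_below {j k : ℤ} (h : j ≤ k) : M.gr j ≤ M.below k := fun z hz => by
  rw [below, Submodule.mem_sInf]
  exact fun p hp => hp.2.2 j h hz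

lemma below_mono {j k : ℤ} (h : j ≤ k) : M.below j ≤ M.below k :=
  sInf_le_sInf fun p hp => ⟨hp.1, hp.2.1, fun i hi => hp.2.2 i (hi.trans h)⟩

end A1Module

/-- Lemma 3.11: if `M` is a reduced, bounded below, `Q₀`-local `A(1)`-module and `M^{k-1}` is
isomorphic to a flock of seagulls, then the quotient `M^k/M^{k-1}` is isomorphic to a direct sum
of copies of `Σ^k Υ₁`:  there are elements `b i ∈ (M^k)_k` whose images generate `1`-seagulls
whose words form a basis of the quotient. -/
theorem lem_quotient (M : A1Module) (hred : M.Reduced) (hbdd : M.BoundedBelow)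
    (hloc : M.Q0Local) (k : ℤ)
    (hfl : ∃ (I : Type) (α : I → ℤ) (n : I → ℕ∞),
      (∀ i, 1 ≤ n i) ∧ M.FlockBasisOn (M.below (k - 1)) I α n) :
    ∃ (I : Type) (b : I → M.carrier),
      (∀ i, b i ∈ M.below k) ∧ (∀ i, b i ∈ M.gr k) ∧
      (∀ i, M.sq1 (b i) ∈ M.below (k - 1)) ∧
      LinearIndependent (ZMod 2)
        (fun q : I × Fin 4 =>
          Submodule.Quotient.mk (p := M.below (k - 1)) (M.w4 q.2 (b q.1))) ∧
      Submodule.span (ZMod 2) (Set.range fun q : I × Fin 4 => M.w4 q.2 (b q.1)) ⊔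
          M.below (k - 1) = M.below k := by
  classical
  open A1Module in
  obtain ⟨I₀, α, n, hn1, y, hygr, hy0, hylink, hyind, hyspan⟩ := hfl
  set B := M.below (k - 1) with hBdef
  have hT : ∀ v : M.carrier, M.sq1 (M.sq2 (M.sq1 (M.sq2 v))) = 0 := A1Module.Tzero hred
  have hB1 : ∀ z ∈ B, M.sq1 z ∈ B := fun z hz => A1Module.below_sq1 hz
  have hB2 : ∀ z ∈ B, M.sq2 z ∈ B := fun z hz => A1Module.below_sq2 hz
  have hQ1B : ∀ z ∈ B, M.Q1 z ∈ B := fun z hz => by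
    rw [A1Module.hQ1app]
    exact add_mem (hB1 _ (hB2 _ hz)) (hB2 _ (hB1 _ hz))
  have hgrB : ∀ j : ℤ, j ≤ k - 1 → M.gr j ≤ B := fun j hj => A1Module.gr_le_below hj
  -- the flock basis family
  set Y : {x : I₀ × ℕ // (x.2 : ℕ∞) < n x.1} × Fin 4 → M.carrier :=
    fun q => M.w4 q.2 (y q.1.1.1 q.1.1.2) with hYdef
  have hYmem : ∀ q : {x : I₀ × ℕ // (x.2 : ℕ∞) < n x.1} × Fin 4, ∃ c, Y q ∈ M.gr c := by
    rintro ⟨p, w⟩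
    have h0 := hygr p.1.1 p.1.2 p.2
    fin_cases w
    · exact ⟨_, h0⟩
    · exact ⟨_, A1Module.sq2_mem h0 rfl⟩
    · exact ⟨_, A1Module.sq1_mem (A1Module.sq2_mem h0 rfl) rfl⟩
    · exact ⟨_, A1Module.sq2_mem (A1Module.sq1_mem (A1Module.sq2_mem h0 rfl) rfl) rfl⟩
  have hBgr : B = ⨆ c : ℤ, B ⊓ M.gr c := by
    rw [← hyspan]
    exact A1Module.span_graded fun g hg => by
      obtain ⟨q, rfl⟩ := hg
      exact hYmem q
  -- Sq² Sq¹ kills the chain generators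
  have hsq1y : ∀ p : {x : I₀ × ℕ // (x.2 : ℕ∞) < n x.1},
      M.sq2 (M.sq1 (y p.1.1 p.1.2)) = 0 := by
    rintro ⟨⟨i, j⟩, hj⟩
    cases j with
    | zero => rw [hy0 i, map_zero]
    | succ j' =>
      rw [hylink i j' (by exact_mod_cast hj)]
      exact A1Module.o5 (M.sq2 (y i j'))
  -- Q1 on the flock basis words
  have hQ1Y0 : ∀ p : {x : I₀ × ℕ // (x.2 : ℕ∞) < n x.1},
      M.Q1 (M.w4 0 (y p.1.1 p.1.2)) = M.w4 2 (y p.1.1 p.1.2) := by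
    intro p
    show M.sq1 (M.sq2 (y p.1.1 p.1.2)) + M.sq2 (M.sq1 (y p.1.1 p.1.2)) =
      M.sq1 (M.sq2 (y p.1.1 p.1.2))
    rw [hsq1y p, add_zero]
  have hQ1Y1 : ∀ p : {x : I₀ × ℕ // (x.2 : ℕ∞) < n x.1},
      M.Q1 (M.w4 1 (y p.1.1 p.1.2)) = M.w4 3 (y p.1.1 p.1.2) := by
    intro p
    show M.sq1 (M.sq2 (M.sq2 (y p.1.1 p.1.2))) + M.sq2 (M.sq1 (M.sq2 (y p.1.1 p.1.2))) =
      M.sq2 (M.sq1 (M.sq2 (y p.1.1 p.1.2)))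
    rw [A1Module.o4, zero_add]
  have hQ1Y2 : ∀ p : {x : I₀ × ℕ // (x.2 : ℕ∞) < n x.1},
      M.Q1 (M.w4 2 (y p.1.1 p.1.2)) = 0 := by
    intro p
    show M.sq1 (M.sq2 (M.sq1 (M.sq2 (y p.1.1 p.1.2)))) +
      M.sq2 (M.sq1 (M.sq1 (M.sq2 (y p.1.1 p.1.2)))) = 0
    rw [hT, M.sq1_sq1, map_zero, add_zero]
  have hQ1Y3 : ∀ p : {x : I₀ × ℕ // (x.2 : ℕ∞) < n x.1},
      M.Q1 (M.w4 3 (y p.1.1 p.1.2)) = 0 := by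
    intro p
    show M.sq1 (M.sq2 (M.sq2 (M.sq1 (M.sq2 (y p.1.1 p.1.2))))) +
      M.sq2 (M.sq1 (M.sq2 (M.sq1 (M.sq2 (y p.1.1 p.1.2))))) = 0
    rw [A1Module.o4, A1Module.o9, add_zero]
  have hQQz : ∀ z : M.carrier, M.Q1 (M.Q1 z) = 0 := by
    intro z
    rw [A1Module.hQ1app z, A1Module.hQ1app]
    simp only [map_add, A1Module.o3, A1Module.o4, hT, M.sq1_sq1, map_zero, add_zero, zero_add]
  have hQ1gr : ∀ (a : ℤ) (z : M.carrier), z ∈ M.gr a → M.Q1 z ∈ M.gr (a + 3) := by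
    intro a z hz
    rw [A1Module.hQ1app]
    exact add_mem (A1Module.sq1_mem (A1Module.sq2_mem hz rfl) (by omega))
      (A1Module.sq2_mem (A1Module.sq1_mem hz rfl) (by omega))
  -- the key acyclicity lemma
  have hstar : ∀ (j : ℤ) (v : M.carrier), v ∈ M.gr j → M.Q1 v ∈ B → j - 3 ≤ k - 1 → v ∈ B := by
    intro j v hvj hQv hjk
    rw [← hyspan, Finsupp.mem_span_range_iff_exists_finsupp] at hQv
    obtain ⟨l, hl⟩ := hQv
    have hlc : Finsupp.linearCombination (ZMod 2) Y l = M.Q1 v := by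
      rw [Finsupp.linearCombination_apply]; exact hl
    set σup : {x : I₀ × ℕ // (x.2 : ℕ∞) < n x.1} × Fin 4 →
        {x : I₀ × ℕ // (x.2 : ℕ∞) < n x.1} × Fin 4 :=
      fun q => (q.1, ![2, 3, 2, 3] q.2) with hσup
    set σdn : {x : I₀ × ℕ // (x.2 : ℕ∞) < n x.1} × Fin 4 →
        {x : I₀ × ℕ // (x.2 : ℕ∞) < n x.1} × Fin 4 :=
      fun q => (q.1, ![0, 1, 0, 1] q.2) with hσdn
    set l01 := l.filter (fun q => q.2 = 0 ∨ q.2 = 1) with hl01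
    set l23 := l.filter (fun q => ¬(q.2 = 0 ∨ q.2 = 1)) with hl23
    have hsplit : l01 + l23 = l := Finsupp.filter_pos_add_filter_neg l _
    have hQl23 : M.Q1 (Finsupp.linearCombination (ZMod 2) Y l23) = 0 := by
      rw [Finsupp.apply_linearCombination, Finsupp.linearCombination_apply, Finsupp.sum]
      apply Finset.sum_eq_zero
      intro q hq
      rw [hl23, Finsupp.support_filter, Finset.mem_filter] at hq
      obtain ⟨p, w⟩ := q
      fin_cases w
      · exact absurd (Or.inl rfl) hq.2
      · exact absurd (Or.inr rfl) hq.2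
      · show _ • (⇑M.Q1 ∘ Y) (p, 2) = 0
        rw [Function.comp_apply, hYdef]
        rw [hQ1Y2 p, smul_zero]
      · show _ • (⇑M.Q1 ∘ Y) (p, 3) = 0
        rw [Function.comp_apply, hYdef]
        rw [hQ1Y3 p, smul_zero]
    have hQl01 : M.Q1 (Finsupp.linearCombination (ZMod 2) Y l01) =
        Finsupp.linearCombination (ZMod 2) Y (l01.mapDomain σup) := by
      rw [Finsupp.apply_linearCombination, Finsupp.linearCombination_mapDomain,
        Finsupp.linearCombination_apply, Finsupp.linearCombination_apply]
      apply Finsupp.sum_congr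
      intro q hq
      rw [hl01, Finsupp.support_filter, Finset.mem_filter] at hq
      obtain ⟨p, w⟩ := q
      fin_cases w
      · show _ • (⇑M.Q1 ∘ Y) (p, 0) = _ • (Y ∘ σup) (p, 0)
        rw [Function.comp_apply, Function.comp_apply, hYdef]
        rw [hQ1Y0 p]
        rfl
      · show _ • (⇑M.Q1 ∘ Y) (p, 1) = _ • (Y ∘ σup) (p, 1)
        rw [Function.comp_apply, Function.comp_apply, hYdef]
        rw [hQ1Y1 p]
        rfl
      · exact absurd hq.2 (by simp)
      · exact absurd hq.2 (by simp)
    have hQQv : Finsupp.linearCombination (ZMod 2) Y (l01.mapDomain σup) = 0 := by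
      have h1 : M.Q1 (Finsupp.linearCombination (ZMod 2) Y l01) +
          M.Q1 (Finsupp.linearCombination (ZMod 2) Y l23) = 0 := by
        rw [← map_add, ← map_add, hsplit, hlc, hQQz]
      rw [hQl23, add_zero, hQl01] at h1
      exact h1
    have hl01z : l01 = 0 := by
      have hz := linearIndependent_iff.mp hyind _ hQQv
      have hinj : Set.InjOn σup
          {q : {x : I₀ × ℕ // (x.2 : ℕ∞) < n x.1} × Fin 4 | q.2 = 0 ∨ q.2 = 1} := by
        rintro ⟨p, w⟩ hw ⟨p', w'⟩ hw' heq
        simp only [Set.mem_setOf_eq] at hw hw'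
        have h1 : p = p' := congrArg Prod.fst heq
        have h2 : (![2, 3, 2, 3] w : Fin 4) = ![2, 3, 2, 3] w' := congrArg Prod.snd heq
        subst h1
        rcases hw with rfl | rfl <;> rcases hw' with rfl | rfl
        · rfl
        · exact absurd h2 (by decide)
        · exact absurd h2 (by decide)
        · rfl
      refine Finsupp.mapDomain_injOn _ hinj ?_ ?_ ?_
      · intro q hq
        rw [hl01, Finsupp.support_filter] at hq
        simp only [Finset.coe_filter, Set.mem_setOf_eq] at hq ⊢
        exact hq.2
      · simp
      · rw [hz, Finsupp.mapDomain_zero]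
    have hQveq : M.Q1 v = Finsupp.linearCombination (ZMod 2) Y l23 := by
      rw [← hlc, ← hsplit, map_add, hl01z, map_zero, zero_add]
    set w' := Finsupp.linearCombination (ZMod 2) Y (l23.mapDomain σdn) with hw'def
    have hw'B : w' ∈ B := by
      rw [← hyspan, Finsupp.mem_span_range_iff_exists_finsupp]
      exact ⟨l23.mapDomain σdn, by rw [← Finsupp.linearCombination_apply, hw'def]⟩
    have hQw' : M.Q1 w' = M.Q1 v := by
      rw [hw'def, Finsupp.apply_linearCombination, Finsupp.linearCombination_mapDomain, hQveq,
        Finsupp.linearCombination_apply, Finsupp.linearCombination_apply]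
      apply Finsupp.sum_congr
      intro q hq
      rw [hl23, Finsupp.support_filter, Finset.mem_filter] at hq
      obtain ⟨p, w⟩ := q
      fin_cases w
      · exact absurd (Or.inl rfl) hq.2
      · exact absurd (Or.inr rfl) hq.2
      · show _ • ((⇑M.Q1 ∘ Y) ∘ σdn) (p, 2) = _ • Y (p, 2)
        show _ • M.Q1 (Y (p, ![0, 1, 0, 1] 2)) = _ • Y (p, 2)
        show _ • M.Q1 (M.w4 0 (y p.1.1 p.1.2)) = _ • M.w4 2 (y p.1.1 p.1.2)
        rw [hQ1Y0 p]
      · show _ • ((⇑M.Q1 ∘ Y) ∘ σdn) (p, 3) = _ • Y (p, 3)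
        show _ • M.Q1 (M.w4 1 (y p.1.1 p.1.2)) = _ • M.w4 3 (y p.1.1 p.1.2)
        rw [hQ1Y1 p]
    have hc0B : M.proj j w' ∈ B := A1Module.proj_mem_of_graded hBgr hw'B j
    have hc0g : M.proj j w' ∈ M.gr j := A1Module.proj_mem j w'
    have hQc0 : M.Q1 (M.proj j w') = M.Q1 v := by
      rw [← A1Module.proj_comm (f := M.Q1) (t := 3) hQ1gr j w', hQw',
        A1Module.proj_of_mem (hQ1gr j v hvj)]
    obtain ⟨u, hu, hQu⟩ := hloc j (Submodule.mem_inf.2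
      ⟨LinearMap.mem_ker.2 (by rw [map_sub, hQc0, sub_self]), sub_mem hvj hc0g⟩)
    have huB : u ∈ B := hgrB (j - 3) hjk hu
    have hveq : v = M.Q1 u + M.proj j w' := by rw [hQu]; abel
    rw [hveq]
    exact add_mem (hQ1B u huB) hc0B
  -- Step (1): Sq¹ of degree-k elements lands in B
  have hstep1 : ∀ x ∈ M.gr k, M.sq1 x ∈ B := by
    intro x hx
    have hb1 : M.Q1 (M.sq1 (M.sq2 x)) = 0 := by
      rw [A1Module.hQ1app, hT, M.sq1_sq1, map_zero, add_zero]
    obtain ⟨y0, hy0gr, hy0Q⟩ := hloc (k + 3) (Submodule.mem_inf.2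
      ⟨LinearMap.mem_ker.2 hb1, A1Module.sq1_mem (A1Module.sq2_mem hx rfl) (by omega)⟩)
    have hy0k : y0 ∈ M.gr k := by rwa [show k + 3 - 3 = k by ring] at hy0gr
    have h2 : M.sq1 (M.sq2 (M.sq1 y0)) = 0 := by
      have h := congrArg M.sq1 hy0Q
      rw [A1Module.hQ1app] at h
      simp only [map_add, M.sq1_sq1, zero_add] at h
      exact h
    have h4 : M.sq1 y0 ∈ B := by
      refine hstar (k + 1) _ (A1Module.sq1_mem hy0k rfl) ?_ (by omega)
      rw [A1Module.hQ1app, h2, M.sq1_sq1, map_zero, add_zero]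
      exact Submodule.zero_mem B
    have h5 : M.sq1 (M.sq2 (x - y0)) ∈ B := by
      rw [map_sub, map_sub]
      have heq : M.sq1 (M.sq2 x) - M.sq1 (M.sq2 y0) = M.sq2 (M.sq1 y0) := by
        rw [← hy0Q, A1Module.hQ1app]
        abel
      rw [heq]
      exact hB2 _ h4
    have h6 : M.sq2 (x - y0) ∈ B := by
      refine hstar (k + 2) _ (A1Module.sq2_mem (sub_mem hx hy0k) rfl) ?_ (by omega)
      rw [A1Module.hQ1app, A1Module.o4, zero_add]
      exact hB2 _ h5
    have h7 : M.sq1 (x - y0) ∈ B := by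
      refine hstar (k + 1) _ (A1Module.sq1_mem (sub_mem hx hy0k) rfl) ?_ (by omega)
      rw [A1Module.hQ1app, M.sq1_sq1, map_zero, add_zero, ← M.sq2_sq2]
      exact hB2 _ h6
    have heq2 : M.sq1 x = M.sq1 (x - y0) + M.sq1 y0 := by
      rw [← map_add, sub_add_cancel]
    rw [heq2]
    exact add_mem h7 h4
  -- Step (2): injectivity statements
  have hInj : ∀ x ∈ M.gr k, M.sq2 (M.sq1 (M.sq2 x)) ∈ B → x ∈ B := by
    intro x hx hs
    have h6 : M.sq2 x ∈ B := by
      refine hstar (k + 2) _ (A1Module.sq2_mem hx rfl) ?_ (by omega)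
      rw [A1Module.hQ1app, A1Module.o4, zero_add]
      exact hs
    have h7 : M.sq1 x ∈ B := by
      refine hstar (k + 1) _ (A1Module.sq1_mem hx rfl) ?_ (by omega)
      rw [A1Module.hQ1app, M.sq1_sq1, map_zero, add_zero, ← M.sq2_sq2]
      exact hB2 _ h6
    refine hstar k x hx ?_ (by omega)
    rw [A1Module.hQ1app]
    exact add_mem (hB1 _ h6) (hB2 _ h7)
  have hInj2 : ∀ x ∈ M.gr k, M.sq2 x ∈ B → x ∈ B := fun x hx h =>
    hInj x hx (hB2 _ (hB1 _ h))
  have hInj3 : ∀ x ∈ M.gr k, M.sq1 (M.sq2 x) ∈ B → x ∈ B := fun x hx h =>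
    hInj x hx (hB2 _ h)
  -- the complement W of B ⊓ gr k inside gr k, with a basis
  obtain ⟨W', hW'⟩ := Submodule.exists_isCompl ((B ⊓ M.gr k).comap (M.gr k).subtype)
  set W : Submodule (ZMod 2) M.carrier := W'.map (M.gr k).subtype with hWdef
  have hWG : W ≤ M.gr k := by
    rw [hWdef]
    exact Submodule.map_subtype_le _ _
  have hWB0 : ∀ z : M.carrier, z ∈ W → z ∈ B → z = 0 := by
    intro z hzW hzB
    rw [hWdef, Submodule.mem_map] at hzW
    obtain ⟨z', hz', rfl⟩ := hzW
    have hz'2 : z' ∈ (B ⊓ M.gr k).comap (M.gr k).subtype :=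
      Submodule.mem_comap.2 (Submodule.mem_inf.2 ⟨hzB, z'.2⟩)
    have : z' = 0 := (Submodule.disjoint_def.mp hW'.disjoint) z' hz'2 hz'
    rw [this, map_zero]
  have hGsub : M.gr k ≤ W ⊔ B := by
    intro z hz
    have h1 : (⟨z, hz⟩ : ↥(M.gr k)) ∈ (B ⊓ M.gr k).comap (M.gr k).subtype ⊔ W' := by
      rw [hW'.sup_eq_top]
      trivial
    obtain ⟨u, hu, v, hv, huv⟩ := Submodule.mem_sup.1 h1
    have hz' : z = (M.gr k).subtype u + (M.gr k).subtype v := by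
      rw [← map_add, huv]
      rfl
    rw [hz']
    refine add_mem (Submodule.mem_sup_right ?_) (Submodule.mem_sup_left ?_)
    · exact (Submodule.mem_inf.1 (Submodule.mem_comap.1 hu)).1
    · exact Submodule.mem_map_of_mem hv
  set bas := Module.Basis.ofVectorSpace (ZMod 2) ↥W with hbasdef
  set b : (Module.Basis.ofVectorSpaceIndex (ZMod 2) ↥W) → M.carrier := fun i => ↑(bas i) with hbdef2
  have hbW : ∀ i, b i ∈ W := fun i => (bas i).2
  have hbgr : ∀ i, b i ∈ M.gr k := fun i => hWG (hbW i)
  have hbind : LinearIndependent (ZMod 2) b :=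
    bas.linearIndependent.map' W.subtype (Submodule.ker_subtype W)
  have hWspan : Submodule.span (ZMod 2) (Set.range b) = W := by
    have h1 : Set.range b = W.subtype '' Set.range bas := by
      rw [← Set.range_comp]
      rfl
    rw [h1, ← Submodule.map_span, Module.Basis.span_eq, Submodule.map_subtype_top]
  refine ⟨Module.Basis.ofVectorSpaceIndex (ZMod 2) ↥W, b, fun i => A1Module.gr_le_below le_rfl (hbgr i),
    hbgr, fun i => hstep1 _ (hbgr i), ?_, ?_⟩
  · -- linear independence in the quotient
    rw [linearIndependent_iff']
    intro s g hsum q₀ hq₀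
    have hβB : (∑ q ∈ s, g q • M.w4 q.2 (b q.1)) ∈ B := by
      have h1 : B.mkQ (∑ q ∈ s, g q • M.w4 q.2 (b q.1)) = 0 := by
        rw [map_sum]
        simp only [map_smul, Submodule.mkQ_apply]
        exact hsum
      rwa [Submodule.mkQ_apply, Submodule.Quotient.mk_eq_zero] at h1
    set vw : Fin 4 → M.carrier :=
      fun w => ∑ q ∈ s.filter (fun q => q.2 = w), g q • b q.1 with hvwdef
    have hvwgr : ∀ w, vw w ∈ M.gr k := fun w =>
      Submodule.sum_mem _ fun q _ => Submodule.smul_mem _ _ (hbgr q.1)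
    have hvwW : ∀ w, vw w ∈ W := fun w =>
      Submodule.sum_mem _ fun q _ => Submodule.smul_mem _ _ (hbW q.1)
    have hzw : ∀ w : Fin 4,
        (∑ q ∈ s.filter (fun q => q.2 = w), g q • M.w4 q.2 (b q.1)) = M.w4 w (vw w) := by
      intro w
      rw [hvwdef, map_sum]
      refine Finset.sum_congr rfl fun q hq => ?_
      rw [map_smul, (Finset.mem_filter.mp hq).2]
    have hβeq : (∑ q ∈ s, g q • M.w4 q.2 (b q.1)) =
        M.w4 0 (vw 0) + M.w4 1 (vw 1) + M.w4 2 (vw 2) + M.w4 3 (vw 3) := by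
      rw [← hzw 0, ← hzw 1, ← hzw 2, ← hzw 3]
      rw [← Finset.sum_fiberwise_of_maps_to (fun q _ => Finset.mem_univ q.2)
        (fun q => g q • M.w4 q.2 (b q.1)), Fin.sum_univ_four]
    have hm0 : M.w4 0 (vw 0) ∈ M.gr k := A1Module.w4m0 (hvwgr 0) (by ring)
    have hm1 : M.w4 1 (vw 1) ∈ M.gr (k + 2) := A1Module.w4m1 (hvwgr 1) rfl
    have hm2 : M.w4 2 (vw 2) ∈ M.gr (k + 3) := A1Module.w4m2 (hvwgr 2) rfl
    have hm3 : M.w4 3 (vw 3) ∈ M.gr (k + 5) := A1Module.w4m3 (hvwgr 3) rfl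
    have hx0 : M.w4 0 (vw 0) ∈ B := by
      have h := A1Module.proj_mem_of_graded hBgr hβB k
      rwa [hβeq, map_add, map_add, map_add, A1Module.proj_of_mem hm0,
        A1Module.proj_of_ne hm1 (show k + 2 ≠ k by omega),
        A1Module.proj_of_ne hm2 (show k + 3 ≠ k by omega),
        A1Module.proj_of_ne hm3 (show k + 5 ≠ k by omega), add_zero, add_zero, add_zero] at h
    have hx1 : M.w4 1 (vw 1) ∈ B := by
      have h := A1Module.proj_mem_of_graded hBgr hβB (k + 2)
      rwa [hβeq, map_add, map_add, map_add, A1Module.proj_of_mem hm1,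
        A1Module.proj_of_ne hm0 (show k ≠ k + 2 by omega),
        A1Module.proj_of_ne hm2 (show k + 3 ≠ k + 2 by omega),
        A1Module.proj_of_ne hm3 (show k + 5 ≠ k + 2 by omega), add_zero, add_zero, zero_add] at h
    have hx2 : M.w4 2 (vw 2) ∈ B := by
      have h := A1Module.proj_mem_of_graded hBgr hβB (k + 3)
      rwa [hβeq, map_add, map_add, map_add, A1Module.proj_of_mem hm2,
        A1Module.proj_of_ne hm0 (show k ≠ k + 3 by omega),
        A1Module.proj_of_ne hm1 (show k + 2 ≠ k + 3 by omega),
        A1Module.proj_of_ne hm3 (show k + 5 ≠ k + 3 by omega), add_zero, zero_add, zero_add] at h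
    have hx3 : M.w4 3 (vw 3) ∈ B := by
      have h := A1Module.proj_mem_of_graded hBgr hβB (k + 5)
      rwa [hβeq, map_add, map_add, map_add, A1Module.proj_of_mem hm3,
        A1Module.proj_of_ne hm0 (show k ≠ k + 5 by omega),
        A1Module.proj_of_ne hm1 (show k + 2 ≠ k + 5 by omega),
        A1Module.proj_of_ne hm2 (show k + 3 ≠ k + 5 by omega), zero_add, zero_add, zero_add] at h
    have hvB : ∀ w : Fin 4, vw w ∈ B := by
      intro w
      fin_cases w
      · exact hx0
      · exact hInj2 _ (hvwgr 1) hx1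
      · exact hInj3 _ (hvwgr 2) hx2
      · exact hInj _ (hvwgr 3) hx3
    have hvz : ∀ w : Fin 4, vw w = 0 := fun w => hWB0 _ (hvwW w) (hvB w)
    have hinj1 : ∀ x ∈ s.filter (fun q => q.2 = q₀.2), ∀ y ∈ s.filter (fun q => q.2 = q₀.2),
        x.1 = y.1 → x = y := by
      intro x hx y' hy' h1
      have h2 : x.2 = y'.2 :=
        (Finset.mem_filter.mp hx).2.trans (Finset.mem_filter.mp hy').2.symm
      exact Prod.ext h1 h2
    have hsum2 : ∑ i ∈ (s.filter (fun q => q.2 = q₀.2)).image Prod.fst,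
        g (i, q₀.2) • b i = 0 := by
      rw [Finset.sum_image hinj1]
      have h3 : ∑ q ∈ s.filter (fun q => q.2 = q₀.2), g (q.1, q₀.2) • b q.1 = vw q₀.2 := by
        rw [hvwdef]
        refine Finset.sum_congr rfl fun q hq => ?_
        rw [← (Finset.mem_filter.mp hq).2, Prod.mk.eta]
      rw [h3, hvz]
    have h4 := linearIndependent_iff'.mp hbind _ _ hsum2 q₀.1
      (Finset.mem_image.2 ⟨q₀, Finset.mem_filter.2 ⟨hq₀, rfl⟩, rfl⟩)
    rwa [Prod.mk.eta] at h4
  · -- the span condition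
    apply le_antisymm
    · refine sup_le ?_ (A1Module.below_mono (by omega))
      rw [Submodule.span_le]
      rintro _ ⟨⟨i, w⟩, rfl⟩
      have hbb : b i ∈ M.below k := A1Module.gr_le_below le_rfl (hbgr i)
      fin_cases w
      · exact hbb
      · exact A1Module.below_sq2 hbb
      · exact A1Module.below_sq1 (A1Module.below_sq2 hbb)
      · exact A1Module.below_sq2 (A1Module.below_sq1 (A1Module.below_sq2 hbb))
    · set R := Submodule.span (ZMod 2)
        (Set.range fun q : (Module.Basis.ofVectorSpaceIndex (ZMod 2) ↥W) × Fin 4 =>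
          M.w4 q.2 (b q.1)) ⊔ B with hRdef
      have hgenR : ∀ (i : Module.Basis.ofVectorSpaceIndex (ZMod 2) ↥W) (w : Fin 4),
          M.w4 w (b i) ∈ R := fun i w =>
        Submodule.mem_sup_left (Submodule.subset_span ⟨(i, w), rfl⟩)
      have hBR : B ≤ R := le_sup_right
      have hR1 : ∀ z ∈ R, M.sq1 z ∈ R := by
        intro z hz
        have hle : R ≤ Submodule.comap M.sq1 R := by
          rw [hRdef]
          refine sup_le ?_ ?_
          · rw [Submodule.span_le]
            rintro _ ⟨⟨i, w⟩, rfl⟩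
            simp only [SetLike.mem_coe, Submodule.mem_comap]
            fin_cases w
            · exact hBR (hstep1 _ (hbgr i))
            · exact hgenR i 2
            · show M.sq1 (M.sq1 (M.sq2 (b i))) ∈ R
              rw [M.sq1_sq1]
              exact Submodule.zero_mem R
            · show M.sq1 (M.sq2 (M.sq1 (M.sq2 (b i)))) ∈ R
              rw [hT]
              exact Submodule.zero_mem R
          · intro z hz2
            exact Submodule.mem_comap.2 (hBR (hB1 _ hz2))
        exact hle hz
      have hR2 : ∀ z ∈ R, M.sq2 z ∈ R := by
        intro z hz
        have hle : R ≤ Submodule.comap M.sq2 R := by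
          rw [hRdef]
          refine sup_le ?_ ?_
          · rw [Submodule.span_le]
            rintro _ ⟨⟨i, w⟩, rfl⟩
            simp only [SetLike.mem_coe, Submodule.mem_comap]
            fin_cases w
            · exact hgenR i 1
            · show M.sq2 (M.sq2 (b i)) ∈ R
              rw [M.sq2_sq2]
              exact hBR (hB1 _ (hB2 _ (hstep1 _ (hbgr i))))
            · exact hgenR i 3
            · show M.sq2 (M.sq2 (M.sq1 (M.sq2 (b i)))) ∈ R
              rw [A1Module.o5]
              exact Submodule.zero_mem R
          · intro z hz2
            exact Submodule.mem_comap.2 (hBR (hB2 _ hz2))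
        exact hle hz
      have hRgr : ∀ j : ℤ, j ≤ k → M.gr j ≤ R := by
        intro j hj
        by_cases hj1 : j ≤ k - 1
        · exact le_trans (hgrB j hj1) hBR
        · have hjk : j = k := by omega
          subst hjk
          refine le_trans hGsub (sup_le ?_ hBR)
          rw [← hWspan]
          rw [Submodule.span_le]
          rintro _ ⟨i, rfl⟩
          exact hgenR i 0
      exact sInf_le ⟨hR1, hR2, hRgr⟩
end

section
/- Let M be a reduced, bounded below, Q_0-local A(1)-module such that M^{k−1} is isomorphic to a flock of seagulls, and let b ∈ M_k be an element with Sq^1 b ∈ M^{k−1} and b ∉ M^{k−1} + ker(Sq^1). Then there exists a ∈ (M^{k−1})_k such that Sq^1(b + a) is a nonzero element of the image of Sq^2 Sq^1 Sq^2: M_{k−4} → M_{k+1}. -/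
namespace A1Module

variable {M : A1Module}

-- x + x = 0 (char 2)
lemma add_self_zero (x : M.carrier) : x + x = 0 := by
  have h : (2 : ZMod 2) • x = 0 := by
    have h2 : (2 : ZMod 2) = 0 := by decide
    rw [h2, zero_smul]
  rwa [two_smul] at h

lemma topEq (x : M.carrier) :
    M.sq2 (M.sq1 (M.sq2 (M.sq1 x))) = M.sq1 (M.sq2 (M.sq1 (M.sq2 x))) := by
  rw [← M.sq2_sq2 x, M.sq2_sq2 (M.sq2 x)]

-- L0
lemma sum_homog_eq_zero {T : Finset ℤ} {z : ℤ → M.carrier}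
    (hz : ∀ t ∈ T, z t ∈ M.gr t) (h : ∑ t ∈ T, z t = 0) :
    ∀ t ∈ T, z t = 0 := by
  intro t ht
  have hsplit : z t + ∑ u ∈ T.erase t, z u = 0 := by
    rwa [Finset.add_sum_erase T z ht]
  have hmem2 : z t ∈ ⨆ u, ⨆ (_ : u ≠ t), M.gr u := by
    have he : z t = - ∑ u ∈ T.erase t, z u := by
      rw [eq_neg_iff_add_eq_zero]; exact hsplit
    rw [he]
    refine neg_mem (Submodule.sum_mem _ fun u hu => ?_)
    have hne : u ≠ t := Finset.ne_of_mem_erase hu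
    exact Submodule.mem_iSup_of_mem u (Submodule.mem_iSup_of_mem hne (hz u (Finset.mem_of_mem_erase hu)))
  have hd := M.indep t
  exact (Submodule.disjoint_def.mp hd) _ (hz t ht) hmem2

end A1Module
namespace A1Module

variable {M : A1Module}

open Classical in
-- L1: coefficients of a homogeneous element w.r.t. a homogeneous independent family
lemma homog_coeffs {J : Type} {v : J → M.carrier} (li : LinearIndependent (ZMod 2) v)
    {dv : J → ℤ} (hv : ∀ j, v j ∈ M.gr (dv j)) (c : J →₀ ZMod 2) {D : ℤ}
    (hz : (c.sum fun j a => a • v j) ∈ M.gr D) :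
    ∀ j, dv j ≠ D → c j = 0 := by
  intro j0 hj0
  by_contra hc0
  have hj0s : j0 ∈ c.support := Finsupp.mem_support_iff.mpr hc0
  set z := c.sum fun j a => a • v j with hzdef
  set T : Finset ℤ := insert D (c.support.image dv) with hT
  set zk : ℤ → M.carrier :=
    fun t => (∑ j ∈ c.support.filter (fun j => dv j = t), c j • v j)
      - (if t = D then z else 0) with hzk
  have hmem : ∀ t ∈ T, zk t ∈ M.gr t := by
    intro t _
    refine sub_mem (Submodule.sum_mem _ fun j hj => ?_) ?_
    · have : dv j = t := (Finset.mem_filter.mp hj).2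
      exact Submodule.smul_mem _ _ (this ▸ hv j)
    · by_cases h : t = D
      · simp only [h, if_pos rfl]; exact h ▸ hz
      · simp [h]
  have hsum : ∑ t ∈ T, zk t = 0 := by
    have h1 : ∑ t ∈ T, ∑ j ∈ c.support.filter (fun j => dv j = t), c j • v j
        = ∑ j ∈ c.support, c j • v j := by
      apply Finset.sum_fiberwise_of_maps_to
      intro j hj
      exact Finset.mem_insert_of_mem (Finset.mem_image_of_mem dv hj)
    have h2 : ∑ t ∈ T, (if t = D then z else 0) = z := by
      rw [Finset.sum_ite_eq' T D (fun _ => z)]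
      simp [hT]
    rw [hzk]
    rw [Finset.sum_sub_distrib, h1, h2]
    rw [hzdef, Finsupp.sum]
    exact sub_self _
  have hall := M.sum_homog_eq_zero hmem hsum
  set t0 := dv j0 with ht0
  have ht0T : t0 ∈ T := Finset.mem_insert_of_mem (Finset.mem_image_of_mem dv hj0s)
  have hz0 := hall t0 ht0T
  have hzt0 : ∑ j ∈ c.support.filter (fun j => dv j = t0), c j • v j = 0 := by
    have : (if t0 = D then z else 0) = 0 := by simp [hj0]
    rw [hzk] at hz0; simp only [this, sub_zero] at hz0; exact hz0
  -- use linear independence on the filtered finsupp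
  set c' : J →₀ ZMod 2 := c.filter (fun j => dv j = t0) with hc'
  have hcomb : Finsupp.linearCombination (ZMod 2) v c' = 0 := by
    rw [Finsupp.linearCombination_apply, Finsupp.sum, Finsupp.support_filter, ← hzt0]
    apply Finset.sum_congr rfl
    intro j hj
    have hp : dv j = t0 := (Finset.mem_filter.mp hj).2
    rw [hc', Finsupp.filter_apply_pos (fun j => dv j = t0) c hp]
  have hczero := linearIndependent_iff.mp li c' hcomb
  have hcz : c' j0 = c j0 := Finsupp.filter_apply_pos (fun j => dv j = t0) c rfl
  rw [hczero] at hcz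
  exact hc0 hcz.symm

end A1Module
namespace A1Module
variable {M : A1Module}

lemma gr_shift {a b : ℤ} (h : a = b) {x : M.carrier} (hx : x ∈ M.gr a) : x ∈ M.gr b := h ▸ hx

lemma top_eq_zero_of_reduced (M : A1Module) (hred : M.Reduced) {k : ℤ} {bb : M.carrier}
    (hb : bb ∈ M.gr k) : M.sq1 (M.sq2 (M.sq1 (M.sq2 bb))) = 0 := by
  by_contra htop
  classical
  set e : Fin 8 → M.carrier := fun j => M.w8 j bb with he
  have he0 : e 0 = bb := rfl
  have he1 : e 1 = M.sq1 (bb) := rfl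
  have he2 : e 2 = M.sq2 (bb) := rfl
  have he3 : e 3 = M.sq1 (M.sq2 (bb)) := rfl
  have he4 : e 4 = M.sq2 (M.sq1 (bb)) := rfl
  have he5 : e 5 = M.sq1 (M.sq2 (M.sq1 (bb))) := rfl
  have he6 : e 6 = M.sq2 (M.sq1 (M.sq2 (bb))) := rfl
  have he7 : e 7 = M.sq1 (M.sq2 (M.sq1 (M.sq2 (bb)))) := rfl
  set Dop : Fin 8 → (M.carrier →ₗ[ZMod 2] M.carrier) := fun j => M.w8 (![7, 6, 5, 3, 4, 2, 1, 0] j) with hDop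
  have hDop0 : ∀ x : M.carrier, Dop 0 x = M.sq1 (M.sq2 (M.sq1 (M.sq2 (x)))) := fun _ => rfl
  have hDop1 : ∀ x : M.carrier, Dop 1 x = M.sq2 (M.sq1 (M.sq2 (x))) := fun _ => rfl
  have hDop2 : ∀ x : M.carrier, Dop 2 x = M.sq1 (M.sq2 (M.sq1 (x))) := fun _ => rfl
  have hDop3 : ∀ x : M.carrier, Dop 3 x = M.sq1 (M.sq2 (x)) := fun _ => rfl
  have hDop4 : ∀ x : M.carrier, Dop 4 x = M.sq2 (M.sq1 (x)) := fun _ => rfl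
  have hDop5 : ∀ x : M.carrier, Dop 5 x = M.sq2 (x) := fun _ => rfl
  have hDop6 : ∀ x : M.carrier, Dop 6 x = M.sq1 (x) := fun _ => rfl
  have hDop7 : ∀ x : M.carrier, Dop 7 x = x := fun _ => rfl
  have hegr0 : e 0 ∈ M.gr (k) := by
    rw [he0]
    exact gr_shift (by ring) hb
  have hegr1 : e 1 ∈ M.gr (k + 1) := by
    rw [he1]
    exact gr_shift (by ring) (M.sq1_gr _ _ hb)
  have hegr2 : e 2 ∈ M.gr (k + 2) := by
    rw [he2]
    exact gr_shift (by ring) (M.sq2_gr _ _ hb)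
  have hegr3 : e 3 ∈ M.gr (k + 3) := by
    rw [he3]
    exact gr_shift (by ring) (M.sq1_gr _ _ (M.sq2_gr _ _ hb))
  have hegr4 : e 4 ∈ M.gr (k + 3) := by
    rw [he4]
    exact gr_shift (by ring) (M.sq2_gr _ _ (M.sq1_gr _ _ hb))
  have hegr5 : e 5 ∈ M.gr (k + 4) := by
    rw [he5]
    exact gr_shift (by ring) (M.sq1_gr _ _ (M.sq2_gr _ _ (M.sq1_gr _ _ hb)))
  have hegr6 : e 6 ∈ M.gr (k + 5) := by
    rw [he6]
    exact gr_shift (by ring) (M.sq2_gr _ _ (M.sq1_gr _ _ (M.sq2_gr _ _ hb)))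
  have hegr7 : e 7 ∈ M.gr (k + 6) := by
    rw [he7]
    exact gr_shift (by ring) (M.sq1_gr _ _ (M.sq2_gr _ _ (M.sq1_gr _ _ (M.sq2_gr _ _ hb))))
  have hDgr0 : ∀ (d : ℤ) (x : M.carrier), x ∈ M.gr d → Dop 0 x ∈ M.gr (d + 6) := by
    intro d x hx
    rw [hDop0]
    exact gr_shift (by ring) (M.sq1_gr _ _ (M.sq2_gr _ _ (M.sq1_gr _ _ (M.sq2_gr _ _ hx))))
  have hDgr1 : ∀ (d : ℤ) (x : M.carrier), x ∈ M.gr d → Dop 1 x ∈ M.gr (d + 5) := by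
    intro d x hx
    rw [hDop1]
    exact gr_shift (by ring) (M.sq2_gr _ _ (M.sq1_gr _ _ (M.sq2_gr _ _ hx)))
  have hDgr2 : ∀ (d : ℤ) (x : M.carrier), x ∈ M.gr d → Dop 2 x ∈ M.gr (d + 4) := by
    intro d x hx
    rw [hDop2]
    exact gr_shift (by ring) (M.sq1_gr _ _ (M.sq2_gr _ _ (M.sq1_gr _ _ hx)))
  have hDgr3 : ∀ (d : ℤ) (x : M.carrier), x ∈ M.gr d → Dop 3 x ∈ M.gr (d + 3) := by
    intro d x hx
    rw [hDop3]
    exact gr_shift (by ring) (M.sq1_gr _ _ (M.sq2_gr _ _ hx))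
  have hDgr4 : ∀ (d : ℤ) (x : M.carrier), x ∈ M.gr d → Dop 4 x ∈ M.gr (d + 3) := by
    intro d x hx
    rw [hDop4]
    exact gr_shift (by ring) (M.sq2_gr _ _ (M.sq1_gr _ _ hx))
  have hDgr5 : ∀ (d : ℤ) (x : M.carrier), x ∈ M.gr d → Dop 5 x ∈ M.gr (d + 2) := by
    intro d x hx
    rw [hDop5]
    exact gr_shift (by ring) (M.sq2_gr _ _ hx)
  have hDgr6 : ∀ (d : ℤ) (x : M.carrier), x ∈ M.gr d → Dop 6 x ∈ M.gr (d + 1) := by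
    intro d x hx
    rw [hDop6]
    exact gr_shift (by ring) (M.sq1_gr _ _ hx)
  have hDgr7 : ∀ (d : ℤ) (x : M.carrier), x ∈ M.gr d → Dop 7 x ∈ M.gr (d + 0) := by
    intro d x hx
    rw [hDop7]
    exact gr_shift (by ring) hx
  set Tt : M.carrier := M.sq1 (M.sq2 (M.sq1 (M.sq2 bb))) with hTt
  have hTgr : Tt ∈ M.gr (k + 6) := hegr7
  set N : Submodule (ZMod 2) M.carrier := ⨆ d, ⨆ (_ : d ≠ k + 6), M.gr d with hN
  have hdisj : Disjoint (M.gr (k + 6)) N := M.indep (k + 6)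
  have hcod : M.gr (k + 6) ⊔ N = ⊤ := by
    refine le_antisymm le_top ?_
    rw [← M.total]
    refine iSup_le fun d => ?_
    by_cases hd : d = k + 6
    · exact hd ▸ le_sup_left
    · exact le_trans (le_iSup₂_of_le d hd le_rfl) le_sup_right
  have hcompl : IsCompl (M.gr (k + 6)) N := ⟨hdisj, codisjoint_iff.mpr hcod⟩
  set pi6 := Submodule.linearProjOfIsCompl _ _ hcompl with hpi6
  set x7 : ↥(M.gr (k + 6)) := ⟨Tt, hTgr⟩ with hx7
  have hx7ne : x7 ≠ 0 := by
    intro h; apply htop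
    have h2 := congrArg (Subtype.val) h
    simpa [hx7, hTt] using h2
  obtain ⟨W, hW⟩ := Submodule.exists_isCompl ((ZMod 2) ∙ x7)
  set pw := Submodule.linearProjOfIsCompl _ _ hW with hpw
  set lam : M.carrier →ₗ[ZMod 2] ZMod 2 :=
    ((LinearEquiv.coord (ZMod 2) _ x7 hx7ne).toLinearMap.comp pw).comp pi6 with hlam
  have hlamtop : lam Tt = 1 := by
    have h1 : pi6 Tt = x7 := Submodule.linearProjOfIsCompl_apply_left hcompl x7
    have h2 : pw x7 = ⟨x7, Submodule.mem_span_singleton_self x7⟩ :=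
      Submodule.linearProjOfIsCompl_apply_left hW ⟨x7, Submodule.mem_span_singleton_self x7⟩
    rw [hlam, LinearMap.comp_apply, LinearMap.comp_apply, h1, h2]
    exact LinearEquiv.coord_self (ZMod 2) _ x7 hx7ne
  have hlam0 : ∀ {d : ℤ} {x : M.carrier}, x ∈ M.gr d → d ≠ k + 6 → lam x = 0 := by
    intro d x hx hd
    have hxN : x ∈ N := by
      rw [hN]
      have hle : M.gr d ≤ ⨆ d, ⨆ (_ : d ≠ k + 6), M.gr d := le_iSup₂_of_le d hd le_rfl
      exact hle hx
    have h1 : pi6 x = 0 := Submodule.linearProjOfIsCompl_apply_right hcompl ⟨x, hxN⟩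
    rw [hlam, LinearMap.comp_apply, LinearMap.comp_apply, h1, map_zero pw]
    exact map_zero _
  have hKd0 : lam (Dop 0 (e 0)) = 1 := by
    rw [hDop0, he0]
    rw [show M.sq1 (M.sq2 (M.sq1 (M.sq2 (bb)))) = Tt from by rw [hTt]; try simp [M.sq1_sq1, M.sq2_sq2, topEq]]
    exact hlamtop
  have hKd1 : lam (Dop 1 (e 1)) = 1 := by
    rw [hDop1, he1]
    rw [show M.sq2 (M.sq1 (M.sq2 (M.sq1 (bb)))) = Tt from by rw [hTt]; try simp [M.sq1_sq1, M.sq2_sq2, topEq]]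
    exact hlamtop
  have hKd2 : lam (Dop 2 (e 2)) = 1 := by
    rw [hDop2, he2]
    rw [show M.sq1 (M.sq2 (M.sq1 (M.sq2 (bb)))) = Tt from by rw [hTt]; try simp [M.sq1_sq1, M.sq2_sq2, topEq]]
    exact hlamtop
  have hKd3 : lam (Dop 3 (e 3)) = 1 := by
    rw [hDop3, he3]
    rw [show M.sq1 (M.sq2 (M.sq1 (M.sq2 (bb)))) = Tt from by rw [hTt]; try simp [M.sq1_sq1, M.sq2_sq2, topEq]]
    exact hlamtop
  have hKd4 : lam (Dop 4 (e 4)) = 1 := by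
    rw [hDop4, he4]
    rw [show M.sq2 (M.sq1 (M.sq2 (M.sq1 (bb)))) = Tt from by rw [hTt]; try simp [M.sq1_sq1, M.sq2_sq2, topEq]]
    exact hlamtop
  have hKd5 : lam (Dop 5 (e 5)) = 1 := by
    rw [hDop5, he5]
    rw [show M.sq2 (M.sq1 (M.sq2 (M.sq1 (bb)))) = Tt from by rw [hTt]; try simp [M.sq1_sq1, M.sq2_sq2, topEq]]
    exact hlamtop
  have hKd6 : lam (Dop 6 (e 6)) = 1 := by
    rw [hDop6, he6]
    rw [show M.sq1 (M.sq2 (M.sq1 (M.sq2 (bb)))) = Tt from by rw [hTt]; try simp [M.sq1_sq1, M.sq2_sq2, topEq]]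
    exact hlamtop
  have hKd7 : lam (Dop 7 (e 7)) = 1 := by
    rw [hDop7, he7]
    exact hlamtop
  have hKo : ∀ i j : Fin 8, i ≠ j → lam (Dop i (e j)) = 0 := by
    intro i j hij
    fin_cases i <;> fin_cases j
    · exact absurd rfl hij
    · exact hlam0 (hDgr0 _ _ hegr1) (by omega)
    · exact hlam0 (hDgr0 _ _ hegr2) (by omega)
    · exact hlam0 (hDgr0 _ _ hegr3) (by omega)
    · exact hlam0 (hDgr0 _ _ hegr4) (by omega)
    · exact hlam0 (hDgr0 _ _ hegr5) (by omega)
    · exact hlam0 (hDgr0 _ _ hegr6) (by omega)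
    · exact hlam0 (hDgr0 _ _ hegr7) (by omega)
    · exact hlam0 (hDgr1 _ _ hegr0) (by omega)
    · exact absurd rfl hij
    · exact hlam0 (hDgr1 _ _ hegr2) (by omega)
    · exact hlam0 (hDgr1 _ _ hegr3) (by omega)
    · exact hlam0 (hDgr1 _ _ hegr4) (by omega)
    · exact hlam0 (hDgr1 _ _ hegr5) (by omega)
    · exact hlam0 (hDgr1 _ _ hegr6) (by omega)
    · exact hlam0 (hDgr1 _ _ hegr7) (by omega)
    · exact hlam0 (hDgr2 _ _ hegr0) (by omega)
    · exact hlam0 (hDgr2 _ _ hegr1) (by omega)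
    · exact absurd rfl hij
    · exact hlam0 (hDgr2 _ _ hegr3) (by omega)
    · exact hlam0 (hDgr2 _ _ hegr4) (by omega)
    · exact hlam0 (hDgr2 _ _ hegr5) (by omega)
    · exact hlam0 (hDgr2 _ _ hegr6) (by omega)
    · exact hlam0 (hDgr2 _ _ hegr7) (by omega)
    · exact hlam0 (hDgr3 _ _ hegr0) (by omega)
    · exact hlam0 (hDgr3 _ _ hegr1) (by omega)
    · exact hlam0 (hDgr3 _ _ hegr2) (by omega)
    · exact absurd rfl hij
    · exact (by rw [hDop3, he4]; simp [M.sq1_sq1, M.sq2_sq2, topEq] : lam ((Dop 3) (e 4)) = 0)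
    · exact hlam0 (hDgr3 _ _ hegr5) (by omega)
    · exact hlam0 (hDgr3 _ _ hegr6) (by omega)
    · exact hlam0 (hDgr3 _ _ hegr7) (by omega)
    · exact hlam0 (hDgr4 _ _ hegr0) (by omega)
    · exact hlam0 (hDgr4 _ _ hegr1) (by omega)
    · exact hlam0 (hDgr4 _ _ hegr2) (by omega)
    · exact (by rw [hDop4, he3]; simp [M.sq1_sq1, M.sq2_sq2, topEq] : lam ((Dop 4) (e 3)) = 0)
    · exact absurd rfl hij
    · exact hlam0 (hDgr4 _ _ hegr5) (by omega)
    · exact hlam0 (hDgr4 _ _ hegr6) (by omega)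
    · exact hlam0 (hDgr4 _ _ hegr7) (by omega)
    · exact hlam0 (hDgr5 _ _ hegr0) (by omega)
    · exact hlam0 (hDgr5 _ _ hegr1) (by omega)
    · exact hlam0 (hDgr5 _ _ hegr2) (by omega)
    · exact hlam0 (hDgr5 _ _ hegr3) (by omega)
    · exact hlam0 (hDgr5 _ _ hegr4) (by omega)
    · exact absurd rfl hij
    · exact hlam0 (hDgr5 _ _ hegr6) (by omega)
    · exact hlam0 (hDgr5 _ _ hegr7) (by omega)
    · exact hlam0 (hDgr6 _ _ hegr0) (by omega)
    · exact hlam0 (hDgr6 _ _ hegr1) (by omega)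
    · exact hlam0 (hDgr6 _ _ hegr2) (by omega)
    · exact hlam0 (hDgr6 _ _ hegr3) (by omega)
    · exact hlam0 (hDgr6 _ _ hegr4) (by omega)
    · exact hlam0 (hDgr6 _ _ hegr5) (by omega)
    · exact absurd rfl hij
    · exact hlam0 (hDgr6 _ _ hegr7) (by omega)
    · exact hlam0 (hDgr7 _ _ hegr0) (by omega)
    · exact hlam0 (hDgr7 _ _ hegr1) (by omega)
    · exact hlam0 (hDgr7 _ _ hegr2) (by omega)
    · exact hlam0 (hDgr7 _ _ hegr3) (by omega)
    · exact hlam0 (hDgr7 _ _ hegr4) (by omega)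
    · exact hlam0 (hDgr7 _ _ hegr5) (by omega)
    · exact hlam0 (hDgr7 _ _ hegr6) (by omega)
    · exact absurd rfl hij


  have hK : ∀ i j : Fin 8, lam (Dop i (e j)) = if i = j then 1 else 0 := by
    intro i j
    by_cases h : i = j
    · subst h
      rw [if_pos rfl]
      fin_cases i
      · exact hKd0
      · exact hKd1
      · exact hKd2
      · exact hKd3
      · exact hKd4
      · exact hKd5
      · exact hKd6
      · exact hKd7
    · rw [if_neg h]
      exact hKo i j h
  set r : M.carrier →ₗ[ZMod 2] M.carrier := ∑ j : Fin 8, ((lam ∘ₗ Dop j).smulRight (e j)) with hrdef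
  have hr_apply : ∀ m, r m = ∑ j : Fin 8, lam (Dop j m) • e j := by
    intro m
    rw [hrdef, LinearMap.sum_apply]
    exact Finset.sum_congr rfl fun j _ => rfl
  have hre : ∀ i : Fin 8, r (e i) = e i := by
    intro i
    rw [hr_apply]
    have hcoef : ∀ j : Fin 8, lam (Dop j (e i)) = if j = i then 1 else 0 := fun j => hK j i
    simp [hcoef, ite_smul]
  have hs1_0 : M.sq1 (e 0) = e 1 := rfl
  have hs1_1 : M.sq1 (e 1) = 0 := by rw [he1]; simp [M.sq1_sq1, M.sq2_sq2, topEq]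
  have hs1_2 : M.sq1 (e 2) = e 3 := rfl
  have hs1_3 : M.sq1 (e 3) = 0 := by rw [he3]; simp [M.sq1_sq1, M.sq2_sq2, topEq]
  have hs1_4 : M.sq1 (e 4) = e 5 := rfl
  have hs1_5 : M.sq1 (e 5) = 0 := by rw [he5]; simp [M.sq1_sq1, M.sq2_sq2, topEq]
  have hs1_6 : M.sq1 (e 6) = e 7 := rfl
  have hs1_7 : M.sq1 (e 7) = 0 := by rw [he7, hTt]; simp [M.sq1_sq1, M.sq2_sq2, topEq]
  have hs2_0 : M.sq2 (e 0) = e 2 := rfl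
  have hs2_1 : M.sq2 (e 1) = e 4 := rfl
  have hs2_2 : M.sq2 (e 2) = e 5 := by rw [he2, he5]; simp [M.sq1_sq1, M.sq2_sq2, topEq]
  have hs2_3 : M.sq2 (e 3) = e 6 := rfl
  have hs2_4 : M.sq2 (e 4) = 0 := by rw [he4]; simp [M.sq1_sq1, M.sq2_sq2, topEq]
  have hs2_5 : M.sq2 (e 5) = e 7 := by rw [he5, he7, hTt]; simp [M.sq1_sq1, M.sq2_sq2, topEq]
  have hs2_6 : M.sq2 (e 6) = 0 := by rw [he6]; simp [M.sq1_sq1, M.sq2_sq2, topEq]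
  have hs2_7 : M.sq2 (e 7) = 0 := by rw [he7, hTt]; simp [M.sq1_sq1, M.sq2_sq2, topEq]
  have hr1 : ∀ m, r (M.sq1 m) = M.sq1 (r m) := by
    intro m
    rw [hr_apply, hr_apply, map_sum, Fin.sum_univ_eight, Fin.sum_univ_eight]
    simp only [map_smul]
    simp only [hDop0, hDop1, hDop2, hDop3, hDop4, hDop5, hDop6, hDop7, hs1_0, hs1_1, hs1_2, hs1_3, hs1_4, hs1_5, hs1_6, hs1_7]
    simp [M.sq1_sq1, M.sq2_sq2, topEq, ← hTt]
  have hr2 : ∀ m, r (M.sq2 m) = M.sq2 (r m) := by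
    intro m
    rw [hr_apply, hr_apply, map_sum, Fin.sum_univ_eight, Fin.sum_univ_eight]
    simp only [map_smul]
    simp only [hDop0, hDop1, hDop2, hDop3, hDop4, hDop5, hDop6, hDop7, hs2_0, hs2_1, hs2_2, hs2_3, hs2_4, hs2_5, hs2_6, hs2_7]
    simp [M.sq1_sq1, M.sq2_sq2, topEq, ← hTt]
  set p : Submodule (ZMod 2) M.carrier := Submodule.span (ZMod 2) (Set.range e) with hp
  have hrmem : ∀ m, r m ∈ p := by
    intro m; rw [hr_apply]
    exact Submodule.sum_mem _ fun j _ => Submodule.smul_mem _ _ (Submodule.subset_span ⟨j, rfl⟩)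
  have hrp : ∀ x ∈ p, r x = x := by
    intro x hx
    induction hx using Submodule.span_induction with
    | mem x h => obtain ⟨j, rfl⟩ := h; exact hre j
    | zero => exact map_zero r
    | add x y _ _ hx hy => rw [map_add, hx, hy]
    | smul c x _ hx => rw [map_smul, hx]
  have hrgr : ∀ (d : ℤ) (x : M.carrier), x ∈ M.gr d → r x ∈ M.gr d := by
    intro d x hx
    rw [hr_apply]
    refine Submodule.sum_mem _ fun j _ => ?_
    fin_cases j
    · show lam (Dop 0 x) • e 0 ∈ M.gr d
      by_cases hc : k = d
      · exact Submodule.smul_mem _ _ (gr_shift hc hegr0)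
      · rw [hlam0 (hDgr0 d x hx) (by omega), zero_smul]
        exact zero_mem _
    · show lam (Dop 1 x) • e 1 ∈ M.gr d
      by_cases hc : k + 1 = d
      · exact Submodule.smul_mem _ _ (gr_shift hc hegr1)
      · rw [hlam0 (hDgr1 d x hx) (by omega), zero_smul]
        exact zero_mem _
    · show lam (Dop 2 x) • e 2 ∈ M.gr d
      by_cases hc : k + 2 = d
      · exact Submodule.smul_mem _ _ (gr_shift hc hegr2)
      · rw [hlam0 (hDgr2 d x hx) (by omega), zero_smul]
        exact zero_mem _
    · show lam (Dop 3 x) • e 3 ∈ M.gr d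
      by_cases hc : k + 3 = d
      · exact Submodule.smul_mem _ _ (gr_shift hc hegr3)
      · rw [hlam0 (hDgr3 d x hx) (by omega), zero_smul]
        exact zero_mem _
    · show lam (Dop 4 x) • e 4 ∈ M.gr d
      by_cases hc : k + 3 = d
      · exact Submodule.smul_mem _ _ (gr_shift hc hegr4)
      · rw [hlam0 (hDgr4 d x hx) (by omega), zero_smul]
        exact zero_mem _
    · show lam (Dop 5 x) • e 5 ∈ M.gr d
      by_cases hc : k + 4 = d
      · exact Submodule.smul_mem _ _ (gr_shift hc hegr5)
      · rw [hlam0 (hDgr5 d x hx) (by omega), zero_smul]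
        exact zero_mem _
    · show lam (Dop 6 x) • e 6 ∈ M.gr d
      by_cases hc : k + 5 = d
      · exact Submodule.smul_mem _ _ (gr_shift hc hegr6)
      · rw [hlam0 (hDgr6 d x hx) (by omega), zero_smul]
        exact zero_mem _
    · show lam (Dop 7 x) • e 7 ∈ M.gr d
      by_cases hc : k + 6 = d
      · exact Submodule.smul_mem _ _ (gr_shift hc hegr7)
      · rw [hlam0 (hDgr7 d x hx) (by omega), zero_smul]
        exact zero_mem _
  set q : Submodule (ZMod 2) M.carrier := LinearMap.ker r with hq
  have hpa : M.IsA1Sub p := by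
    refine ⟨?_, ?_, ?_⟩
    · intro x hx
      induction hx using Submodule.span_induction with
      | mem x h => 
        obtain ⟨j, rfl⟩ := h
        fin_cases j
        · show M.sq1 (e 0) ∈ p
          rw [hs1_0]
          exact Submodule.subset_span ⟨1, rfl⟩
        · show M.sq1 (e 1) ∈ p
          rw [hs1_1]
          exact zero_mem _
        · show M.sq1 (e 2) ∈ p
          rw [hs1_2]
          exact Submodule.subset_span ⟨3, rfl⟩
        · show M.sq1 (e 3) ∈ p
          rw [hs1_3]
          exact zero_mem _
        · show M.sq1 (e 4) ∈ p
          rw [hs1_4]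
          exact Submodule.subset_span ⟨5, rfl⟩
        · show M.sq1 (e 5) ∈ p
          rw [hs1_5]
          exact zero_mem _
        · show M.sq1 (e 6) ∈ p
          rw [hs1_6]
          exact Submodule.subset_span ⟨7, rfl⟩
        · show M.sq1 (e 7) ∈ p
          rw [hs1_7]
          exact zero_mem _
      | zero => rw [map_zero]; exact zero_mem _
      | add x y _ _ hx hy => rw [map_add]; exact Submodule.add_mem _ hx hy
      | smul c x _ hx => rw [map_smul]; exact Submodule.smul_mem _ _ hx
    · intro x hx
      induction hx using Submodule.span_induction with
      | mem x h => 
        obtain ⟨j, rfl⟩ := h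
        fin_cases j
        · show M.sq2 (e 0) ∈ p
          rw [hs2_0]
          exact Submodule.subset_span ⟨2, rfl⟩
        · show M.sq2 (e 1) ∈ p
          rw [hs2_1]
          exact Submodule.subset_span ⟨4, rfl⟩
        · show M.sq2 (e 2) ∈ p
          rw [hs2_2]
          exact Submodule.subset_span ⟨5, rfl⟩
        · show M.sq2 (e 3) ∈ p
          rw [hs2_3]
          exact Submodule.subset_span ⟨6, rfl⟩
        · show M.sq2 (e 4) ∈ p
          rw [hs2_4]
          exact zero_mem _
        · show M.sq2 (e 5) ∈ p
          rw [hs2_5]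
          exact Submodule.subset_span ⟨7, rfl⟩
        · show M.sq2 (e 6) ∈ p
          rw [hs2_6]
          exact zero_mem _
        · show M.sq2 (e 7) ∈ p
          rw [hs2_7]
          exact zero_mem _
      | zero => rw [map_zero]; exact zero_mem _
      | add x y _ _ hx hy => rw [map_add]; exact Submodule.add_mem _ hx hy
      | smul c x _ hx => rw [map_smul]; exact Submodule.smul_mem _ _ hx
    · refine le_antisymm ?_ (iSup_le fun d => inf_le_left)
      rw [hp, Submodule.span_le]
      rintro x ⟨j, rfl⟩
      fin_cases j
      · exact Submodule.mem_iSup_of_mem (k) (Submodule.mem_inf.mpr ⟨Submodule.subset_span ⟨0, rfl⟩, hegr0⟩)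
      · exact Submodule.mem_iSup_of_mem (k + 1) (Submodule.mem_inf.mpr ⟨Submodule.subset_span ⟨1, rfl⟩, hegr1⟩)
      · exact Submodule.mem_iSup_of_mem (k + 2) (Submodule.mem_inf.mpr ⟨Submodule.subset_span ⟨2, rfl⟩, hegr2⟩)
      · exact Submodule.mem_iSup_of_mem (k + 3) (Submodule.mem_inf.mpr ⟨Submodule.subset_span ⟨3, rfl⟩, hegr3⟩)
      · exact Submodule.mem_iSup_of_mem (k + 3) (Submodule.mem_inf.mpr ⟨Submodule.subset_span ⟨4, rfl⟩, hegr4⟩)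
      · exact Submodule.mem_iSup_of_mem (k + 4) (Submodule.mem_inf.mpr ⟨Submodule.subset_span ⟨5, rfl⟩, hegr5⟩)
      · exact Submodule.mem_iSup_of_mem (k + 5) (Submodule.mem_inf.mpr ⟨Submodule.subset_span ⟨6, rfl⟩, hegr6⟩)
      · exact Submodule.mem_iSup_of_mem (k + 6) (Submodule.mem_inf.mpr ⟨Submodule.subset_span ⟨7, rfl⟩, hegr7⟩)
  have hqa : M.IsA1Sub q := by
    refine ⟨?_, ?_, ?_⟩
    · intro x hx
      rw [hq, LinearMap.mem_ker] at hx ⊢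
      rw [hr1, hx, map_zero]
    · intro x hx
      rw [hq, LinearMap.mem_ker] at hx ⊢
      rw [hr2, hx, map_zero]
    · refine le_antisymm ?_ (iSup_le fun d => inf_le_left)
      intro x hx
      have hxT : x ∈ ⨆ d, M.gr d := by rw [M.total]; exact Submodule.mem_top
      rw [Submodule.mem_iSup_iff_exists_finsupp] at hxT
      obtain ⟨f, hf, hsum⟩ := hxT
      have hrsum : ∑ d ∈ f.support, r (f d) = 0 := by
        have h0 : r x = 0 := LinearMap.mem_ker.mp hx
        rw [← hsum, map_finsuppSum] at h0
        exact h0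
      have hz := M.sum_homog_eq_zero (fun d _ => hrgr d (f d) (hf d)) hrsum
      rw [← hsum, Finsupp.sum]
      refine Submodule.sum_mem _ fun d hd => ?_
      exact Submodule.mem_iSup_of_mem d (Submodule.mem_inf.mpr ⟨LinearMap.mem_ker.mpr (hz d hd), hf d⟩)
  have hpq : p ⊓ q = ⊥ := by
    rw [eq_bot_iff]
    rintro x ⟨hxp, hxq⟩
    have h1 := hrp x hxp
    rw [LinearMap.mem_ker.mp hxq] at h1
    rw [Submodule.mem_bot, ← h1]
  have hpq2 : p ⊔ q = ⊤ := by
    rw [eq_top_iff]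
    intro m _
    have h1 : r m ∈ p := hrmem m
    have h2 : m - r m ∈ q := by
      rw [hq, LinearMap.mem_ker, map_sub, hrp (r m) h1, sub_self]
    have h3 : m = r m + (m - r m) := by abel
    rw [h3]
    exact Submodule.add_mem_sup h1 h2
  have hli : LinearIndependent (ZMod 2) e := by
    rw [Fintype.linearIndependent_iff]
    intro g hg i
    have h2 : (lam ∘ₗ Dop i) (∑ j : Fin 8, g j • e j) = 0 := by rw [hg]; exact map_zero _
    rw [map_sum] at h2
    simp only [LinearMap.comp_apply, map_smul, smul_eq_mul, hK] at h2
    simpa using h2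
  have hfree : M.IsFreeOn p := by
    refine ⟨Unit, fun _ => k, fun _ => bb, fun _ => hb, ?_, ?_⟩
    · have hcomp : (fun q : Unit × Fin 8 => M.w8 q.2 ((fun _ : Unit => bb) q.1)) = e ∘ (fun q => q.2) := rfl
      rw [hcomp]
      exact hli.comp (fun q : Unit × Fin 8 => q.2) (fun a b h => Prod.ext (Subsingleton.elim _ _) h)
    · have hrange : (Set.range fun q : Unit × Fin 8 => M.w8 q.2 ((fun _ : Unit => bb) q.1)) = Set.range e := by
        ext x
        constructor
        · rintro ⟨⟨u, j⟩, rfl⟩; exact ⟨j, rfl⟩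
        · rintro ⟨j, rfl⟩; exact ⟨⟨(), j⟩, rfl⟩
      rw [hrange, hp]
  have hbot := hred p ⟨hpa, q, hqa, hpq, hpq2⟩ hfree
  have hTp : Tt ∈ p := by rw [← he7]; exact Submodule.subset_span ⟨7, rfl⟩
  rw [hbot, Submodule.mem_bot] at hTp
  exact htop hTp

end A1Module
namespace A1Module
variable {M : A1Module}

lemma below_sq1_s8 {k' : ℤ} {x : M.carrier} (hx : x ∈ M.below k') : M.sq1 x ∈ M.below k' := by
  rw [below, Submodule.mem_sInf] at hx ⊢
  intro p hp
  exact hp.1 x (hx p hp)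

lemma below_sq2_s8 {k' : ℤ} {x : M.carrier} (hx : x ∈ M.below k') : M.sq2 x ∈ M.below k' := by
  rw [below, Submodule.mem_sInf] at hx ⊢
  intro p hp
  exact hp.2.1 x (hx p hp)

end A1Module
set_option maxHeartbeats 1600000 in
/-- Lemma 3.14: let `M` be a reduced, bounded below, `Q₀`-local `A(1)`-module with `M^{k-1}`
isomorphic to a flock of seagulls, and let `b ∈ M_k` satisfy `Sq¹ b ∈ M^{k-1}` and
`b ∉ M^{k-1} + ker(Sq¹)`.  Then there is `a ∈ (M^{k-1})_k` with `Sq¹(b + a)` a nonzero element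
of the image of `Sq²Sq¹Sq² : M_{k-4} → M_{k+1}`. -/
theorem lem_choose_b (M : A1Module) (hred : M.Reduced) (hbdd : M.BoundedBelow)
    (hloc : M.Q0Local) (k : ℤ)
    (hfl : ∃ (I : Type) (α : I → ℤ) (n : I → ℕ∞),
      (∀ i, 1 ≤ n i) ∧ M.FlockBasisOn (M.below (k - 1)) I α n)
    (b : M.carrier) (hbk : b ∈ M.gr k)
    (hsq1b : M.sq1 b ∈ M.below (k - 1))
    (hnb : b ∉ M.below (k - 1) ⊔ LinearMap.ker M.sq1) :
    ∃ a : M.carrier, a ∈ M.below (k - 1) ∧ a ∈ M.gr k ∧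
      M.sq1 (b + a) ≠ 0 ∧
      ∃ c ∈ M.gr (k - 4), M.sq1 (b + a) = M.sq2 (M.sq1 (M.sq2 c)) := by
  classical
  obtain ⟨I, α, n, hn1, y, hygr, hy0, hychain, hind, hspan⟩ := hfl
  set P : Submodule (ZMod 2) M.carrier := M.below (k - 1) with hPdef
  -- index types
  set v : {x : I × ℕ // (x.2 : ℕ∞) < n x.1} × Fin 4 → M.carrier :=
    fun q => M.w4 q.2 (y q.1.1.1 q.1.1.2) with hv
  -- basis of P
  have hvP : ∀ j, v j ∈ P := by
    intro j
    rw [← hspan]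
    exact Submodule.subset_span (Set.mem_range_self j)
  set v' : {x : I × ℕ // (x.2 : ℕ∞) < n x.1} × Fin 4 → ↥P := fun j => ⟨v j, hvP j⟩ with hv'
  have hli' : LinearIndependent (ZMod 2) v' := by
    apply LinearIndependent.of_comp P.subtype
    exact hind
  have hsp' : ⊤ ≤ Submodule.span (ZMod 2) (Set.range v') := by
    have hinj := Submodule.map_injective_of_injective P.injective_subtype
    apply le_of_eq
    apply hinj
    rw [Submodule.map_span, ← Set.range_comp]
    have hco : P.subtype ∘ v' = v := rfl
    rw [hco, Submodule.map_top, Submodule.range_subtype, hspan]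
  set B := Module.Basis.mk hli' hsp' with hB
  have hBv : ∀ j, (B j : M.carrier) = v j := by
    intro j
    rw [hB, Module.Basis.mk_apply]
  -- degrees
  set dtv : Fin 4 → ℤ := fun t => if t = 0 then 0 else if t = 1 then 2 else if t = 2 then 3 else 5
    with hdtv
  set dv : {x : I × ℕ // (x.2 : ℕ∞) < n x.1} × Fin 4 → ℤ :=
    fun j => α j.1.1.1 + 4 * (j.1.1.2 : ℤ) + dtv j.2 with hdv
  have hvgr : ∀ j, v j ∈ M.gr (dv j) := by
    rintro ⟨⟨⟨i, jj⟩, hs⟩, t⟩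
    have hy := hygr i jj hs
    fin_cases t
    · exact A1Module.gr_shift (by simp [hdv, hdtv]) hy
    · exact A1Module.gr_shift (by simp [hdv, hdtv]; try ring) (M.sq2_gr _ _ hy)
    · exact A1Module.gr_shift (by simp [hdv, hdtv]; try ring) (M.sq1_gr _ _ (M.sq2_gr _ _ hy))
    · exact A1Module.gr_shift (by simp [hdv, hdtv]; try ring)
        (M.sq2_gr _ _ (M.sq1_gr _ _ (M.sq2_gr _ _ hy)))
  -- homogeneity of images of constr maps
  have hH2 : ∀ (vals : _ → ↥P) (shift : ℤ),
      (∀ j, (vals j : M.carrier) ∈ M.gr (dv j + shift)) →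
      ∀ (z : ↥P) (D : ℤ), (z : M.carrier) ∈ M.gr D →
      (((B.constr (ZMod 2) vals) z : ↥P) : M.carrier) ∈ M.gr (D + shift) := by
    intro vals shift hvals z D hzD
    have hrepr : ((Finsupp.linearCombination (ZMod 2) v) (B.repr z)) = (z : M.carrier) := by
      have h1 := B.linearCombination_repr z
      have h2 := congrArg P.subtype h1
      rw [Finsupp.apply_linearCombination] at h2
      have hco : (⇑P.subtype ∘ ⇑B) = v := by
        funext j
        show ((B j : ↥P) : M.carrier) = v j
        exact hBv j
      rw [hco] at h2
      exact h2
    have hsupp : ∀ j, dv j ≠ D → B.repr z j = 0 := by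
      apply A1Module.homog_coeffs hind hvgr
      rw [← Finsupp.linearCombination_apply, hrepr]
      exact hzD
    rw [Module.Basis.constr_apply, Finsupp.sum]
    have hcoe : ((∑ j ∈ (B.repr z).support, (B.repr z) j • vals j : ↥P) : M.carrier)
        = ∑ j ∈ (B.repr z).support, ((B.repr z) j • (vals j : M.carrier)) := by
      exact map_sum P.subtype (fun j => (B.repr z) j • vals j) (B.repr z).support
    rw [hcoe]
    refine Submodule.sum_mem _ fun j hj => ?_
    by_cases hD : dv j = D
    · exact Submodule.smul_mem _ _ (A1Module.gr_shift (by rw [hD]) (hvals j))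
    · rw [hsupp j hD, zero_smul]
      exact zero_mem _
  -- restriction of sq1 to P
  set sq1P : ↥P →ₗ[ZMod 2] ↥P :=
    M.sq1.restrict (fun x hx => A1Module.below_sq1_s8 hx) with hsq1P
  have hsq1Pcoe : ∀ x : ↥P, ((sq1P x : ↥P) : M.carrier) = M.sq1 (x : M.carrier) := fun x => rfl
  -- action of sq1P on the basis
  have hsq1B_0 : ∀ (i : I) (hs : ((0 : ℕ) : ℕ∞) < n i),
      sq1P (B (⟨(i, 0), hs⟩, 0)) = 0 := by
    intro i hs
    apply Subtype.ext
    rw [hsq1Pcoe, hBv]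
    show M.sq1 (y i 0) = ((0 : ↥P) : M.carrier)
    rw [hy0 i, ZeroMemClass.coe_zero]
  have hlt : ∀ (i : I) (jj : ℕ), (((jj + 1 : ℕ) : ℕ∞) < n i) → (((jj : ℕ) : ℕ∞) < n i) := by
    intro i jj h
    refine lt_trans ?_ h
    exact_mod_cast Nat.lt_succ_self jj
  have hsq1B_succ : ∀ (i : I) (jj : ℕ) (hs : (((jj + 1 : ℕ)) : ℕ∞) < n i),
      sq1P (B (⟨(i, jj + 1), hs⟩, 0)) = B (⟨(i, jj), hlt i jj hs⟩, 3) := by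
    intro i jj hs
    apply Subtype.ext
    rw [hsq1Pcoe, hBv, hBv]
    show M.sq1 (y i (jj + 1)) = M.sq2 (M.sq1 (M.sq2 (y i jj)))
    exact hychain i jj hs
  have hsq1B_1 : ∀ s, sq1P (B (s, 1)) = B (s, 2) := by
    intro s
    apply Subtype.ext
    rw [hsq1Pcoe, hBv, hBv]
    rfl
  have hsq1B_2 : ∀ s, sq1P (B (s, 2)) = 0 := by
    intro s
    apply Subtype.ext
    rw [hsq1Pcoe, hBv]
    show M.sq1 (M.sq1 (M.sq2 (y s.1.1 s.1.2))) = ((0 : ↥P) : M.carrier)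
    rw [M.sq1_sq1, ZeroMemClass.coe_zero]
  have hsq1B_3 : ∀ s, sq1P (B (s, 3)) = 0 := by
    rintro ⟨⟨i, jj⟩, hs⟩
    apply Subtype.ext
    rw [hsq1Pcoe, hBv]
    show M.sq1 (M.sq2 (M.sq1 (M.sq2 (y i jj)))) = ((0 : ↥P) : M.carrier)
    rw [ZeroMemClass.coe_zero, ← A1Module.topEq]
    cases jj with
    | zero => rw [hy0 i, map_zero, map_zero, map_zero]
    | succ m =>
      rw [hychain i m hs]
      simp [M.sq1_sq1, M.sq2_sq2, A1Module.topEq]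
  -- the nine structure maps
  set pi0a := B.constr (ZMod 2) (fun j => if j.1.1.2 = 0 ∧ j.2 = 0 then B j else 0) with hpi0a_def
  set pi0b := B.constr (ZMod 2) (fun j => if j.1.1.2 ≠ 0 ∧ j.2 = 0 then B j else 0) with hpi0b_def
  set pi1 := B.constr (ZMod 2) (fun j => if j.2 = 1 then B j else 0) with hpi1_def
  set pi2 := B.constr (ZMod 2) (fun j => if j.2 = 2 then B j else 0) with hpi2_def
  set pi3 := B.constr (ZMod 2) (fun j => if j.2 = 3 then B j else 0) with hpi3_def
  set sig := B.constr (ZMod 2) (fun j => if j.2 = 2 then B (j.1, 1) else 0) with hsig_def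
  set tau := B.constr (ZMod 2) (fun j => if j.2 = 3 then B (j.1, 0) else 0) with htau_def
  set Phi := B.constr (ZMod 2) (fun j => if j.1.1.2 = 0 ∧ j.2 = 0 then B (j.1, 3) else 0) with hPhi_def
  set Xi := B.constr (ZMod 2) (fun j => if j.1.1.2 = 0 ∧ j.2 = 3 then B (j.1, 0) else 0) with hXi_def
  set rho := B.constr (ZMod 2) (fun j =>
    if h : j.2 = 3 ∧ ((j.1.1.2 + 1 : ℕ) : ℕ∞) < n j.1.1.1
    then B (⟨(j.1.1.1, j.1.1.2 + 1), h.2⟩, 0) else 0) with hrho_def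
  have hpi0aB : ∀ j, pi0a (B j) = if j.1.1.2 = 0 ∧ j.2 = 0 then B j else 0 := by
    intro j; rw [hpi0a_def]; exact B.constr_basis (ZMod 2) _ j
  have hpi0bB : ∀ j, pi0b (B j) = if j.1.1.2 ≠ 0 ∧ j.2 = 0 then B j else 0 := by
    intro j; rw [hpi0b_def]; exact B.constr_basis (ZMod 2) _ j
  have hpi1B : ∀ j, pi1 (B j) = if j.2 = 1 then B j else 0 := by
    intro j; rw [hpi1_def]; exact B.constr_basis (ZMod 2) _ j
  have hpi2B : ∀ j, pi2 (B j) = if j.2 = 2 then B j else 0 := by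
    intro j; rw [hpi2_def]; exact B.constr_basis (ZMod 2) _ j
  have hpi3B : ∀ j, pi3 (B j) = if j.2 = 3 then B j else 0 := by
    intro j; rw [hpi3_def]; exact B.constr_basis (ZMod 2) _ j
  have hsigB : ∀ j, sig (B j) = if j.2 = 2 then B (j.1, 1) else 0 := by
    intro j; rw [hsig_def]; exact B.constr_basis (ZMod 2) _ j
  have htauB : ∀ j, tau (B j) = if j.2 = 3 then B (j.1, 0) else 0 := by
    intro j; rw [htau_def]; exact B.constr_basis (ZMod 2) _ j
  have hPhiB : ∀ j, Phi (B j) = if j.1.1.2 = 0 ∧ j.2 = 0 then B (j.1, 3) else 0 := by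
    intro j; rw [hPhi_def]; exact B.constr_basis (ZMod 2) _ j
  have hXiB : ∀ j, Xi (B j) = if j.1.1.2 = 0 ∧ j.2 = 3 then B (j.1, 0) else 0 := by
    intro j; rw [hXi_def]; exact B.constr_basis (ZMod 2) _ j
  have hrhoB : ∀ j, rho (B j) =
      (if h : j.2 = 3 ∧ ((j.1.1.2 + 1 : ℕ) : ℕ∞) < n j.1.1.1
       then B (⟨(j.1.1.1, j.1.1.2 + 1), h.2⟩, 0) else 0) := by
    intro j; rw [hrho_def]; exact B.constr_basis (ZMod 2) _ j
  -- E1 : sum of projections is the identity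
  have hE1 : pi0a + pi0b + pi1 + pi2 + pi3 = LinearMap.id := by
    refine B.ext fun j => ?_
    obtain ⟨⟨⟨i, jj⟩, hs⟩, t⟩ := j
    simp only [LinearMap.add_apply, LinearMap.id_apply, hpi0aB, hpi0bB, hpi1B, hpi2B, hpi3B]
    fin_cases t
    · cases jj with
      | zero => simp
      | succ m => simp
    · simp
    · simp
    · simp
  -- E2 : sig ∘ sq1P = pi1
  have hE2 : sig.comp sq1P = pi1 := by
    refine B.ext fun j => ?_
    obtain ⟨⟨⟨i, jj⟩, hs⟩, t⟩ := j
    rw [LinearMap.comp_apply]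
    fin_cases t
    · show sig (sq1P (B (⟨(i, jj), hs⟩, 0))) = pi1 (B (⟨(i, jj), hs⟩, 0))
      rw [hpi1B]
      cases jj with
      | zero => rw [hsq1B_0 i hs, map_zero]; simp
      | succ m => rw [hsq1B_succ i m hs, hsigB]; simp
    · show sig (sq1P (B (⟨(i, jj), hs⟩, 1))) = pi1 (B (⟨(i, jj), hs⟩, 1))
      rw [hsq1B_1, hsigB, hpi1B]; simp
    · show sig (sq1P (B (⟨(i, jj), hs⟩, 2))) = pi1 (B (⟨(i, jj), hs⟩, 2))
      rw [hsq1B_2, map_zero, hpi1B]; simp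
    · show sig (sq1P (B (⟨(i, jj), hs⟩, 3))) = pi1 (B (⟨(i, jj), hs⟩, 3))
      rw [hsq1B_3, map_zero, hpi1B]; simp
  -- E3 : rho ∘ sq1P = pi0b
  have hE3 : rho.comp sq1P = pi0b := by
    refine B.ext fun j => ?_
    obtain ⟨⟨⟨i, jj⟩, hs⟩, t⟩ := j
    rw [LinearMap.comp_apply]
    fin_cases t
    · show rho (sq1P (B (⟨(i, jj), hs⟩, 0))) = pi0b (B (⟨(i, jj), hs⟩, 0))
      rw [hpi0bB]
      cases jj with
      | zero => rw [hsq1B_0 i hs, map_zero]; simp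
      | succ m =>
        rw [hsq1B_succ i m hs, hrhoB]
        rw [dif_pos ⟨rfl, hs⟩]
        simp
    · show rho (sq1P (B (⟨(i, jj), hs⟩, 1))) = pi0b (B (⟨(i, jj), hs⟩, 1))
      rw [hsq1B_1, hrhoB, hpi0bB]
      rw [dif_neg (by simp)]
      simp
    · show rho (sq1P (B (⟨(i, jj), hs⟩, 2))) = pi0b (B (⟨(i, jj), hs⟩, 2))
      rw [hsq1B_2, map_zero, hpi0bB]; simp
    · show rho (sq1P (B (⟨(i, jj), hs⟩, 3))) = pi0b (B (⟨(i, jj), hs⟩, 3))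
      rw [hsq1B_3, map_zero, hpi0bB]; simp
  -- Mop = Sq2 Sq1 Sq2
  set Mop : M.carrier →ₗ[ZMod 2] M.carrier := M.sq2 ∘ₗ M.sq1 ∘ₗ M.sq2 with hMop
  have hMopapp : ∀ x : M.carrier, Mop x = M.sq2 (M.sq1 (M.sq2 x)) := fun x => rfl
  -- E4 : sq1 ∘ sig = pi2 (as maps to M)
  have hE4 : M.sq1 ∘ₗ (P.subtype ∘ₗ sig) = P.subtype ∘ₗ pi2 := by
    refine B.ext fun j => ?_
    obtain ⟨⟨⟨i, jj⟩, hs⟩, t⟩ := j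
    simp only [LinearMap.comp_apply]
    fin_cases t
    · show M.sq1 ((sig (B (⟨(i, jj), hs⟩, 0)) : M.carrier)) = ((pi2 (B (⟨(i, jj), hs⟩, 0)) : ↥P) : M.carrier)
      rw [hsigB, hpi2B]
      simp
    · show M.sq1 ((sig (B (⟨(i, jj), hs⟩, 1)) : M.carrier)) = ((pi2 (B (⟨(i, jj), hs⟩, 1)) : ↥P) : M.carrier)
      rw [hsigB, hpi2B]
      simp
    · show M.sq1 ((sig (B (⟨(i, jj), hs⟩, 2)) : M.carrier)) = ((pi2 (B (⟨(i, jj), hs⟩, 2)) : ↥P) : M.carrier)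
      rw [hsigB, hpi2B]
      rw [if_pos rfl, if_pos rfl, hBv, hBv]
      rfl
    · show M.sq1 ((sig (B (⟨(i, jj), hs⟩, 3)) : M.carrier)) = ((pi2 (B (⟨(i, jj), hs⟩, 3)) : ↥P) : M.carrier)
      rw [hsigB, hpi2B]
      simp
  -- E5 : Mop ∘ tau = pi3
  have hE5 : Mop ∘ₗ (P.subtype ∘ₗ tau) = P.subtype ∘ₗ pi3 := by
    refine B.ext fun j => ?_
    obtain ⟨⟨⟨i, jj⟩, hs⟩, t⟩ := j
    simp only [LinearMap.comp_apply]
    fin_cases t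
    · show Mop ((tau (B (⟨(i, jj), hs⟩, 0)) : M.carrier)) = ((pi3 (B (⟨(i, jj), hs⟩, 0)) : ↥P) : M.carrier)
      rw [htauB, hpi3B]
      simp
    · show Mop ((tau (B (⟨(i, jj), hs⟩, 1)) : M.carrier)) = ((pi3 (B (⟨(i, jj), hs⟩, 1)) : ↥P) : M.carrier)
      rw [htauB, hpi3B]
      simp
    · show Mop ((tau (B (⟨(i, jj), hs⟩, 2)) : M.carrier)) = ((pi3 (B (⟨(i, jj), hs⟩, 2)) : ↥P) : M.carrier)
      rw [htauB, hpi3B]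
      simp
    · show Mop ((tau (B (⟨(i, jj), hs⟩, 3)) : M.carrier)) = ((pi3 (B (⟨(i, jj), hs⟩, 3)) : ↥P) : M.carrier)
      rw [htauB, hpi3B]
      rw [if_pos rfl, if_pos rfl, hBv, hBv]
      rfl
  -- E6 : Mop ∘ pi0a = Phi
  have hE6 : Mop ∘ₗ (P.subtype ∘ₗ pi0a) = P.subtype ∘ₗ Phi := by
    refine B.ext fun j => ?_
    obtain ⟨⟨⟨i, jj⟩, hs⟩, t⟩ := j
    simp only [LinearMap.comp_apply]
    fin_cases t
    · show Mop ((pi0a (B (⟨(i, jj), hs⟩, 0)) : M.carrier)) = ((Phi (B (⟨(i, jj), hs⟩, 0)) : ↥P) : M.carrier)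
      rw [hpi0aB, hPhiB]
      cases jj with
      | zero =>
        rw [if_pos ⟨rfl, rfl⟩, if_pos ⟨rfl, rfl⟩, hBv, hBv]
        rfl
      | succ m => simp
    · show Mop ((pi0a (B (⟨(i, jj), hs⟩, 1)) : M.carrier)) = ((Phi (B (⟨(i, jj), hs⟩, 1)) : ↥P) : M.carrier)
      rw [hpi0aB, hPhiB]
      simp
    · show Mop ((pi0a (B (⟨(i, jj), hs⟩, 2)) : M.carrier)) = ((Phi (B (⟨(i, jj), hs⟩, 2)) : ↥P) : M.carrier)
      rw [hpi0aB, hPhiB]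
      simp
    · show Mop ((pi0a (B (⟨(i, jj), hs⟩, 3)) : M.carrier)) = ((Phi (B (⟨(i, jj), hs⟩, 3)) : ↥P) : M.carrier)
      rw [hpi0aB, hPhiB]
      simp
  -- E7 : Mop ∘ pi3 = 0
  have hE7 : Mop ∘ₗ (P.subtype ∘ₗ pi3) = 0 := by
    refine B.ext fun j => ?_
    obtain ⟨⟨⟨i, jj⟩, hs⟩, t⟩ := j
    simp only [LinearMap.comp_apply, LinearMap.zero_apply]
    fin_cases t
    · show Mop ((pi3 (B (⟨(i, jj), hs⟩, 0)) : M.carrier)) = 0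
      rw [hpi3B]
      simp
    · show Mop ((pi3 (B (⟨(i, jj), hs⟩, 1)) : M.carrier)) = 0
      rw [hpi3B]
      simp
    · show Mop ((pi3 (B (⟨(i, jj), hs⟩, 2)) : M.carrier)) = 0
      rw [hpi3B]
      simp
    · show Mop ((pi3 (B (⟨(i, jj), hs⟩, 3)) : M.carrier)) = 0
      rw [hpi3B, if_pos rfl, hBv]
      show M.sq2 (M.sq1 (M.sq2 (M.sq2 (M.sq1 (M.sq2 (y i jj)))))) = 0
      simp [M.sq1_sq1, M.sq2_sq2, A1Module.topEq]
  -- E8 : Xi ∘ Phi = pi0a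
  have hE8 : Xi.comp Phi = pi0a := by
    refine B.ext fun j => ?_
    obtain ⟨⟨⟨i, jj⟩, hs⟩, t⟩ := j
    rw [LinearMap.comp_apply]
    fin_cases t
    · show Xi (Phi (B (⟨(i, jj), hs⟩, 0))) = pi0a (B (⟨(i, jj), hs⟩, 0))
      rw [hPhiB, hpi0aB]
      cases jj with
      | zero =>
        rw [if_pos ⟨rfl, rfl⟩, if_pos ⟨rfl, rfl⟩, hXiB]
        rw [if_pos ⟨rfl, rfl⟩]
      | succ m => simp
    · show Xi (Phi (B (⟨(i, jj), hs⟩, 1))) = pi0a (B (⟨(i, jj), hs⟩, 1))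
      rw [hPhiB, hpi0aB]
      simp
    · show Xi (Phi (B (⟨(i, jj), hs⟩, 2))) = pi0a (B (⟨(i, jj), hs⟩, 2))
      rw [hPhiB, hpi0aB]
      simp
    · show Xi (Phi (B (⟨(i, jj), hs⟩, 3))) = pi0a (B (⟨(i, jj), hs⟩, 3))
      rw [hPhiB, hpi0aB]
      simp
  -- the element Z = Sq¹ b viewed in P
  set Z : ↥P := ⟨M.sq1 b, hsq1b⟩ with hZ
  have hZgr : ((Z : ↥P) : M.carrier) ∈ M.gr (k + 1) := M.sq1_gr k b hbk
  have hZ1 : sq1P Z = 0 := by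
    apply Subtype.ext
    rw [hsq1Pcoe]
    show M.sq1 (M.sq1 b) = ((0 : ↥P) : M.carrier)
    rw [M.sq1_sq1, ZeroMemClass.coe_zero]
  have hpi1Z : pi1 Z = 0 := by rw [← hE2, LinearMap.comp_apply, hZ1, map_zero]
  have hpi0bZ : pi0b Z = 0 := by rw [← hE3, LinearMap.comp_apply, hZ1, map_zero]
  have hdecomp : (Z : M.carrier) =
      ((pi0a Z : ↥P) : M.carrier) + ((pi2 Z : ↥P) : M.carrier) + ((pi3 Z : ↥P) : M.carrier) := by
    have h := LinearMap.congr_fun hE1 Z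
    simp only [LinearMap.add_apply, LinearMap.id_apply, hpi1Z, hpi0bZ, add_zero, zero_add] at h
    have h2 := congrArg (fun w : ↥P => (w : M.carrier)) h
    simpa using h2.symm
  -- the correction term a
  set a : M.carrier := ((sig Z : ↥P) : M.carrier) with ha
  have haP : a ∈ P := (sig Z).2
  have hagr : a ∈ M.gr k := by
    have hvals : ∀ j, (((fun j => if j.2 = 2 then B (j.1, 1) else 0) j : ↥P) : M.carrier)
        ∈ M.gr (dv j + (-1)) := by
      rintro ⟨⟨⟨i, jj⟩, hs⟩, t⟩
      fin_cases t
      · simp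
      · simp
      · show ((if (2 : Fin 4) = 2 then B (⟨(i, jj), hs⟩, 1) else 0 : ↥P) : M.carrier)
            ∈ M.gr (dv (⟨(i, jj), hs⟩, 2) + (-1))
        rw [if_pos rfl, hBv]
        exact A1Module.gr_shift (by simp [hdv, hdtv]; try ring) (hvgr (⟨(i, jj), hs⟩, 1))
      · simp
    have h := hH2 _ (-1) hvals Z (k + 1) hZgr
    rw [← hsig_def] at h
    exact A1Module.gr_shift (by ring) h
  have hsq1ba : M.sq1 (b + a) =
      ((pi0a Z : ↥P) : M.carrier) + ((pi3 Z : ↥P) : M.carrier) := by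
    rw [map_add]
    have h4 := LinearMap.congr_fun hE4 Z
    simp only [LinearMap.comp_apply] at h4
    have hZcoe : M.sq1 b = (Z : M.carrier) := rfl
    have hsa : M.sq1 a = ((pi2 Z : ↥P) : M.carrier) := h4
    rw [hZcoe, hsa, hdecomp]
    have habel : ∀ u v w : M.carrier, u + v + w + v = u + w + (v + v) := by intros; abel
    rw [habel, A1Module.add_self_zero, add_zero]
  have hpi0aZ : pi0a Z = 0 := by
    by_contra hne
    have hPhine : Phi Z ≠ 0 := by
      intro h0
      apply hne
      rw [← hE8, LinearMap.comp_apply, h0, map_zero]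
    have hbagr : b + a ∈ M.gr k := Submodule.add_mem _ hbk hagr
    have htop0 := A1Module.top_eq_zero_of_reduced M hred hbagr
    have h6 := LinearMap.congr_fun hE6 Z
    have h7 := LinearMap.congr_fun hE7 Z
    simp only [LinearMap.comp_apply, LinearMap.zero_apply] at h6 h7
    have htopeq : M.sq1 (M.sq2 (M.sq1 (M.sq2 (b + a)))) = ((Phi Z : ↥P) : M.carrier) := by
      rw [← A1Module.topEq]
      have hm : M.sq2 (M.sq1 (M.sq2 (M.sq1 (b + a)))) = Mop (M.sq1 (b + a)) := rfl
      rw [hm, hsq1ba, map_add]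
      have h6' : Mop ((pi0a Z : ↥P) : M.carrier) = ((Phi Z : ↥P) : M.carrier) := h6
      have h7' : Mop ((pi3 Z : ↥P) : M.carrier) = 0 := h7
      rw [h6', h7', add_zero]
    have hcz : ((Phi Z : ↥P) : M.carrier) = 0 := by rw [← htopeq, htop0]
    exact hPhine (Subtype.ext (hcz.trans (ZeroMemClass.coe_zero _).symm))
  have hfinal : M.sq1 (b + a) = ((pi3 Z : ↥P) : M.carrier) := by
    rw [hsq1ba, hpi0aZ]
    simp
  set c : M.carrier := ((tau Z : ↥P) : M.carrier) with hc
  have hcgr : c ∈ M.gr (k - 4) := by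
    have hvals : ∀ j, (((fun j => if j.2 = 3 then B (j.1, 0) else 0) j : ↥P) : M.carrier)
        ∈ M.gr (dv j + (-5)) := by
      rintro ⟨⟨⟨i, jj⟩, hs⟩, t⟩
      fin_cases t
      · simp
      · simp
      · simp
      · show ((if (3 : Fin 4) = 3 then B (⟨(i, jj), hs⟩, 0) else 0 : ↥P) : M.carrier)
            ∈ M.gr (dv (⟨(i, jj), hs⟩, 3) + (-5))
        rw [if_pos rfl, hBv]
        exact A1Module.gr_shift (by simp [hdv, hdtv]; try ring) (hvgr (⟨(i, jj), hs⟩, 0))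
    have h := hH2 _ (-5) hvals Z (k + 1) hZgr
    rw [← htau_def] at h
    exact A1Module.gr_shift (by ring) h
  have heq : M.sq1 (b + a) = M.sq2 (M.sq1 (M.sq2 c)) := by
    have h5 := LinearMap.congr_fun hE5 Z
    simp only [LinearMap.comp_apply] at h5
    have h5' : Mop ((tau Z : ↥P) : M.carrier) = ((pi3 Z : ↥P) : M.carrier) := h5
    rw [hfinal, ← h5']
    rfl
  have hne0 : M.sq1 (b + a) ≠ 0 := by
    intro h0
    apply hnb
    have hker : b + a ∈ LinearMap.ker M.sq1 := LinearMap.mem_ker.mpr h0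
    have hb' : b = -a + (b + a) := by abel
    rw [hb']
    exact Submodule.add_mem _ (Submodule.mem_sup_left (Submodule.neg_mem _ haP))
      (Submodule.mem_sup_right hker)
  exact ⟨a, haP, hagr, hne0, c, hcgr, heq⟩
end

section
/- For any bounded below A(1)-module K of finite type and any integer n, there is a direct sum decomposition K = N ⊕ K' into A(1)-submodules such that N is contained in K^n and K' has no nonzero direct summand contained in K^n. -/
namespace A1Module

variable (M : A1Module)

lemma isA1Sub_bot' : M.IsA1Sub ⊥ :=
  ⟨fun x hx => by simp_all, fun x hx => by simp_all, by simp⟩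

lemma isA1Sub_top' : M.IsA1Sub ⊤ :=
  ⟨fun _ _ => trivial, fun _ _ => trivial, by simp [M.total]⟩

lemma isA1Sub_sup' {p q : Submodule (ZMod 2) M.carrier} (hp : M.IsA1Sub p)
    (hq : M.IsA1Sub q) : M.IsA1Sub (p ⊔ q) := by
  refine ⟨?_, ?_, ?_⟩
  · intro x hx
    have : Submodule.map M.sq1 (p ⊔ q) ≤ p ⊔ q := by
      rw [Submodule.map_sup]
      refine sup_le_sup ?_ ?_
      · rintro y ⟨z, hz, rfl⟩; exact hp.1 z hz
      · rintro y ⟨z, hz, rfl⟩; exact hq.1 z hz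
    exact this ⟨x, hx, rfl⟩
  · intro x hx
    have : Submodule.map M.sq2 (p ⊔ q) ≤ p ⊔ q := by
      rw [Submodule.map_sup]
      refine sup_le_sup ?_ ?_
      · rintro y ⟨z, hz, rfl⟩; exact hp.2.1 z hz
      · rintro y ⟨z, hz, rfl⟩; exact hq.2.1 z hz
    exact this ⟨x, hx, rfl⟩
  · refine le_antisymm (sup_le ?_ ?_) (iSup_le fun k => inf_le_left)
    · calc p = ⨆ k : ℤ, p ⊓ M.gr k := hp.2.2
        _ ≤ ⨆ k : ℤ, (p ⊔ q) ⊓ M.gr k :=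
          iSup_mono fun k => inf_le_inf_right _ le_sup_left
    · calc q = ⨆ k : ℤ, q ⊓ M.gr k := hq.2.2
        _ ≤ ⨆ k : ℤ, (p ⊔ q) ⊓ M.gr k :=
          iSup_mono fun k => inf_le_inf_right _ le_sup_right

lemma w8_eq_0 : M.w8 0 = LinearMap.id := rfl
lemma w8_eq_1 : M.w8 1 = M.sq1 := rfl
lemma w8_eq_2 : M.w8 2 = M.sq2 := rfl
lemma w8_eq_3 : M.w8 3 = M.sq1 ∘ₗ M.sq2 := rfl
lemma w8_eq_4 : M.w8 4 = M.sq2 ∘ₗ M.sq1 := rfl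
lemma w8_eq_5 : M.w8 5 = M.sq1 ∘ₗ M.sq2 ∘ₗ M.sq1 := rfl
lemma w8_eq_6 : M.w8 6 = M.sq2 ∘ₗ M.sq1 ∘ₗ M.sq2 := rfl
lemma w8_eq_7 : M.w8 7 = M.sq1 ∘ₗ M.sq2 ∘ₗ M.sq1 ∘ₗ M.sq2 := rfl

lemma sq2_sq2_sq1 (y : M.carrier) : M.sq2 (M.sq2 (M.sq1 y)) = 0 := by
  rw [M.sq2_sq2, M.sq1_sq1, map_zero, map_zero]

lemma sq2_sq1_sq2_sq1 (y : M.carrier) :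
    M.sq2 (M.sq1 (M.sq2 (M.sq1 y))) = M.sq1 (M.sq2 (M.sq1 (M.sq2 y))) := by
  rw [← M.sq2_sq2 y, M.sq2_sq2 (M.sq2 y)]

lemma sq2_w8_7 (y : M.carrier) : M.sq2 (M.sq1 (M.sq2 (M.sq1 (M.sq2 y)))) = 0 := by
  rw [← M.sq2_sq2 (M.sq2 y), M.sq2_sq2 (M.sq2 (M.sq2 y)), M.sq2_sq2 y, M.sq1_sq1,
    map_zero, map_zero]

lemma sq1_comp_w8 (i : Fin 8) :
    M.sq1 ∘ₗ M.w8 i = 0 ∨ ∃ i' : Fin 8, M.sq1 ∘ₗ M.w8 i = M.w8 i' := by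
  fin_cases i
  · exact Or.inr ⟨1, by ext x; simp [w8_eq_0, w8_eq_1]⟩
  · exact Or.inl (by ext x; simp [w8_eq_1, M.sq1_sq1])
  · exact Or.inr ⟨3, by ext x; simp [w8_eq_2, w8_eq_3]⟩
  · exact Or.inl (by ext x; simp [w8_eq_3, M.sq1_sq1])
  · exact Or.inr ⟨5, by ext x; simp [w8_eq_4, w8_eq_5]⟩
  · exact Or.inl (by ext x; simp [w8_eq_5, M.sq1_sq1])
  · exact Or.inr ⟨7, by ext x; simp [w8_eq_6, w8_eq_7]⟩
  · exact Or.inl (by ext x; simp [w8_eq_7, M.sq1_sq1])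

lemma sq2_comp_w8 (i : Fin 8) :
    M.sq2 ∘ₗ M.w8 i = 0 ∨ ∃ i' : Fin 8, M.sq2 ∘ₗ M.w8 i = M.w8 i' := by
  fin_cases i
  · exact Or.inr ⟨2, by ext x; simp [w8_eq_0, w8_eq_2]⟩
  · exact Or.inr ⟨4, by ext x; simp [w8_eq_1, w8_eq_4]⟩
  · exact Or.inr ⟨5, by ext x; simp [w8_eq_2, w8_eq_5, M.sq2_sq2]⟩
  · exact Or.inr ⟨6, by ext x; simp [w8_eq_3, w8_eq_6]⟩
  · exact Or.inl (by ext x; simp [w8_eq_4, M.sq2_sq2_sq1])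
  · exact Or.inr ⟨7, by ext x; simp [w8_eq_5, w8_eq_7, M.sq2_sq1_sq2_sq1]⟩
  · exact Or.inl (by ext x; simp [w8_eq_6, M.sq2_sq2_sq1 (M.sq2 x)])
  · exact Or.inl (by ext x; simp [w8_eq_7, M.sq2_w8_7])

lemma below_finiteDimensional (hbdd : M.BoundedBelow) (hft : M.FiniteType) (n : ℤ) :
    FiniteDimensional (ZMod 2) ↥(M.below n) := by
  obtain ⟨b, hb⟩ := hbdd
  set T : Submodule (ZMod 2) M.carrier :=
    ⨆ j : Finset.Icc b n, ⨆ i : Fin 8, (M.gr j).map (M.w8 i) with hT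
  have hsub : ∀ j : ℤ, b ≤ j → j ≤ n → ∀ i : Fin 8, (M.gr j).map (M.w8 i) ≤ T := by
    intro j h1 h2 i
    have h3 : (⨆ i : Fin 8, (M.gr j).map (M.w8 i)) ≤ T :=
      le_iSup (fun j' : Finset.Icc b n => ⨆ i : Fin 8, (M.gr (j' : ℤ)).map (M.w8 i))
        ⟨j, Finset.mem_Icc.2 ⟨h1, h2⟩⟩
    exact le_trans (le_iSup (fun i => (M.gr j).map (M.w8 i)) i) h3
  have key : ∀ f : M.carrier →ₗ[ZMod 2] M.carrier,
      (∀ i : Fin 8, f ∘ₗ M.w8 i = 0 ∨ ∃ i', f ∘ₗ M.w8 i = M.w8 i') →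
      Submodule.map f T ≤ T := by
    intro f hf
    rw [hT, Submodule.map_iSup]
    refine iSup_le fun j => ?_
    rw [Submodule.map_iSup]
    refine iSup_le fun i => ?_
    rw [← Submodule.map_comp]
    rcases hf i with h | ⟨i', h⟩
    · rw [h, Submodule.map_zero]; exact bot_le
    · rw [h]
      exact hsub (j : ℤ) (Finset.mem_Icc.1 j.2).1 (Finset.mem_Icc.1 j.2).2 i'
  haveI : ∀ j : ℤ, FiniteDimensional (ZMod 2) ↥(M.gr j) := hft
  haveI : FiniteDimensional (ZMod 2) ↥T := by
    rw [hT]; infer_instance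
  have hbelow : M.below n ≤ T := by
    apply sInf_le
    refine ⟨?_, ?_, ?_⟩
    · intro x hx
      exact key M.sq1 (M.sq1_comp_w8) ⟨x, hx, rfl⟩
    · intro x hx
      exact key M.sq2 (M.sq2_comp_w8) ⟨x, hx, rfl⟩
    · intro j hj
      by_cases hbj : b ≤ j
      · have := hsub j hbj hj 0
        rwa [show M.w8 0 = LinearMap.id from rfl, Submodule.map_id] at this
      · rw [hb j (by omega)]; exact bot_le
  exact Submodule.finiteDimensional_of_le hbelow

end A1Module

/-- Lemma 3.16: for any bounded below `A(1)`-module `K` of finite type and any integer `n`,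
there is a decomposition `K = N ⊕ K'` into `A(1)`-submodules with `N ⊆ K^n` and such that
`K'` has no nonzero direct summand contained in `K^n`. -/
theorem lem_part_one (K : A1Module) (hbdd : K.BoundedBelow) (hft : K.FiniteType) (n : ℤ) :
    ∃ p q : Submodule (ZMod 2) K.carrier,
      K.IsA1Sub p ∧ K.IsA1Sub q ∧ p ⊓ q = ⊥ ∧ p ⊔ q = ⊤ ∧ p ≤ K.below n ∧
      ∀ r s : Submodule (ZMod 2) K.carrier,
        K.IsA1Sub r → K.IsA1Sub s → r ⊓ s = ⊥ → r ⊔ s = q → r ≤ K.below n → r = ⊥ := by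
  classical
  haveI hfd : FiniteDimensional (ZMod 2) ↥(K.below n) :=
    K.below_finiteDimensional hbdd hft n
  set S : Set ℕ := {d | ∃ p : Submodule (ZMod 2) K.carrier,
    K.IsSummand p ∧ p ≤ K.below n ∧ Module.finrank (ZMod 2) ↥p = d} with hS
  have h0 : 0 ∈ S :=
    ⟨⊥, ⟨K.isA1Sub_bot', ⟨⊤, K.isA1Sub_top', bot_inf_eq ⊤, bot_sup_eq ⊤⟩⟩, bot_le,
      finrank_bot _ _⟩
  have hbdS : BddAbove S := by
    refine ⟨Module.finrank (ZMod 2) ↥(K.below n), ?_⟩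
    rintro d ⟨p, _, hle, rfl⟩
    exact Submodule.finrank_mono hle
  obtain ⟨p, hpsum, hple, hpd⟩ := Nat.sSup_mem ⟨0, h0⟩ hbdS
  obtain ⟨hpA1, q, hqA1, hpq, hpq2⟩ := hpsum
  refine ⟨p, q, hpA1, hqA1, hpq, hpq2, hple, ?_⟩
  intro r s hr hs hrs hrsq hrle
  haveI : FiniteDimensional (ZMod 2) ↥p := Submodule.finiteDimensional_of_le hple
  haveI : FiniteDimensional (ZMod 2) ↥r := Submodule.finiteDimensional_of_le hrle
  have hrq : r ≤ q := hrsq ▸ le_sup_left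
  have hsq : s ≤ q := hrsq ▸ le_sup_right
  have hpr : p ⊓ r = ⊥ := le_bot_iff.1 ((inf_le_inf_left p hrq).trans hpq.le)
  have h2 : (p ⊔ r) ⊓ q = r := by
    rw [sup_comm, sup_inf_assoc_of_le p hrq, hpq, sup_bot_eq]
  have hps : (p ⊔ r) ⊓ s = ⊥ := by
    have h3 : (p ⊔ r) ⊓ s ≤ r := by
      calc (p ⊔ r) ⊓ s ≤ (p ⊔ r) ⊓ q := inf_le_inf_left _ hsq
        _ = r := h2
    exact le_bot_iff.1 (hrs ▸ le_inf h3 inf_le_right)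
  have hps2 : (p ⊔ r) ⊔ s = ⊤ := by rw [sup_assoc, hrsq, hpq2]
  have hmem : Module.finrank (ZMod 2) ↥(p ⊔ r) ∈ S :=
    ⟨p ⊔ r, ⟨K.isA1Sub_sup' hpA1 hr, s, hs, hps, hps2⟩, sup_le hple hrle, rfl⟩
  have hle2 : Module.finrank (ZMod 2) ↥(p ⊔ r) ≤ Module.finrank (ZMod 2) ↥p :=
    hpd ▸ le_csSup hbdS hmem
  have heq := Submodule.finrank_sup_add_finrank_inf_eq p r
  rw [hpr, finrank_bot, add_zero] at heq
  have hr0 : Module.finrank (ZMod 2) ↥r = 0 := by omega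
  exact Submodule.finrank_eq_zero.1 hr0
end
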